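/- arXiv:1707.05620 — 2 statements merged into one kernel-verified Lean document; each statement's English description precedes it below -/
import Mathlib

section
/- Let p ≥ 5 be prime, α ≥ 1, and let b(n) be defined by ∑_{n≥0} b(n)qⁿ = f₄³/f₂². Then for all n ≥ 0 and all j with 1 ≤ j ≤ p−1, one has b(p^{2α}·n + ((3j+p)·p^{2α−1} − 1)/3) ≡ 0 (mod 2). -/
open PowerSeries

/-- `f k` is the formal power series `∏_{n ≥ 1} (1 - q^(k*n))` in `ℤ[[q]]`,
defined coefficientwise via partial products (the coefficient of `q^n` is
stable once the partial product includes all factors with `k*m ≤ n`). -/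
noncomputable def f (k : ℕ) : PowerSeries ℤ :=
  PowerSeries.mk fun n =>
    PowerSeries.coeff n
      (∏ m ∈ Finset.range (n + 1), (1 - (PowerSeries.X : PowerSeries ℤ) ^ (k * (m + 1))))

/-- The multiplicative inverse of `f k` in `ℤ[[q]]` (the constant coefficient of `f k` is `1`). -/
noncomputable def finv (k : ℕ) : PowerSeries ℤ := (f k).invOfUnit 1


open Finset


def rBot (T : Finset ℕ) (Mx : ℕ) : ℕ :=
  Nat.find (⟨Mx + 1, by simp [Finset.Icc_eq_empty_of_lt (Nat.lt_succ_self Mx)]⟩ :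
    ∃ x, Finset.Icc x Mx ⊆ T)

lemma rBot_subset (T : Finset ℕ) (Mx : ℕ) : Finset.Icc (rBot T Mx) Mx ⊆ T :=
  Nat.find_spec (⟨Mx + 1, by simp [Finset.Icc_eq_empty_of_lt (Nat.lt_succ_self Mx)]⟩ :
    ∃ x, Finset.Icc x Mx ⊆ T)

lemma rBot_le {T : Finset ℕ} {Mx v : ℕ} (h : Finset.Icc v Mx ⊆ T) : rBot T Mx ≤ v :=
  Nat.find_le h

lemma rBot_eq {T : Finset ℕ} {Mx v : ℕ} (h1 : Finset.Icc v Mx ⊆ T) (h2 : v - 1 ∉ T)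
    (h3 : 1 ≤ v) (h4 : v - 1 ≤ Mx) : rBot T Mx = v := by
  refine le_antisymm (rBot_le h1) ?_
  by_contra hlt
  push_neg at hlt
  have : v - 1 ∈ Finset.Icc (rBot T Mx) Mx := by rw [Finset.mem_Icc]; omega
  exact h2 (rBot_subset T Mx this)

lemma rBot_pred_not_mem {T : Finset ℕ} {Mx : ℕ} (h0 : 0 ∉ T) :
    rBot T Mx - 1 ∉ T := by
  intro hmem
  have hr1 : 1 ≤ rBot T Mx := by
    rcases Nat.eq_zero_or_pos (rBot T Mx) with h | h
    · exact absurd (rBot_subset T Mx (by rw [Finset.mem_Icc]; omega)) h0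
    · exact h
  have hsub : Finset.Icc (rBot T Mx - 1) Mx ⊆ T := by
    intro x hx
    rw [Finset.mem_Icc] at hx
    rcases eq_or_lt_of_le hx.1 with h' | h'
    · rwa [← h']
    · exact rBot_subset T Mx (by rw [Finset.mem_Icc]; omega)
  have := rBot_le hsub
  omega

/-- Franklin's involution. -/
def frk (T : Finset ℕ) : Finset ℕ :=
  if h : T.Nonempty then
    if T.min' h + rBot T (T.max' h) ≤ T.max' h + 1 then
      (T \ insert (T.min' h) (Finset.Icc (T.max' h + 1 - T.min' h) (T.max' h))) ∪
        Finset.Icc (T.max' h + 2 - T.min' h) (T.max' h + 1)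
    else
      ((T \ Finset.Icc (rBot T (T.max' h)) (T.max' h)) ∪
        Finset.Icc (rBot T (T.max' h) - 1) (T.max' h - 1)) ∪ {T.max' h + 1 - rBot T (T.max' h)}
  else T

lemma shift_sum (a b : ℕ) (ha : 1 ≤ a) (hab : a ≤ b) :
    (Finset.Icc a b).sum id = (Finset.Icc (a-1) (b-1)).sum id + (b + 1 - a) := by
  have himg : Finset.Icc a b = (Finset.Icc (a-1) (b-1)).image (· + 1) := by
    rw [Finset.image_add_right_Icc]; congr 1 <;> omega
  rw [himg, Finset.sum_image (by intros _ _ _ _ h; simp only at h; omega)]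
  simp only [id_eq]
  rw [Finset.sum_add_distrib, Finset.sum_const, Nat.card_Icc, smul_eq_mul, mul_one]
  omega

lemma stepI {T : Finset ℕ} {s Mx r : ℕ} (hne : T.Nonempty) (h0 : 0 ∉ T)
    (hs : T.min' hne = s) (hM : T.max' hne = Mx) (hr : rBot T Mx = r)
    (hc : s + r ≤ Mx + 1) (h2s : 2 * s ≤ Mx) :
    frk T ≠ T ∧ (frk T).sum id = T.sum id ∧ (∀ x ∈ frk T, 1 ≤ x) ∧ frk (frk T) = T := by
  have hsmem : s ∈ T := hs ▸ T.min'_mem hne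
  have hMmem : Mx ∈ T := hM ▸ T.max'_mem hne
  have hs1 : 1 ≤ s := Nat.one_le_iff_ne_zero.mpr (fun h => h0 (h ▸ hsmem))
  have hub : ∀ x ∈ T, x ≤ Mx := fun x hx => hM ▸ T.le_max' x hx
  have hlb : ∀ x ∈ T, s ≤ x := fun x hx => hs ▸ T.min'_le x hx
  have hsM : s ≤ Mx := hub s hsmem
  have hrun : Finset.Icc r Mx ⊆ T := hr ▸ rBot_subset T Mx
  have hrM : r ≤ Mx := by
    have h : Finset.Icc Mx Mx ⊆ T := by
      rw [Finset.Icc_self, Finset.singleton_subset_iff]; exact hMmem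
    have := rBot_le h
    omega
  have hI₁T : Finset.Icc (Mx + 1 - s) Mx ⊆ T :=
    (Finset.Icc_subset_Icc_left (by omega)).trans hrun
  have hins : insert s (Finset.Icc (Mx + 1 - s) Mx) ⊆ T := by
    intro x hx
    rcases Finset.mem_insert.mp hx with rfl | hx
    · exact hsmem
    · exact hI₁T hx
  set T' : Finset ℕ := (T \ insert s (Finset.Icc (Mx + 1 - s) Mx)) ∪
      Finset.Icc (Mx + 2 - s) (Mx + 1) with hT'def
  have hfrkT : frk T = T' := by
    unfold frk
    rw [dif_pos hne, hs, hM, hr, if_pos hc]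
  have hmemT' : ∀ x, x ∈ T' ↔
      ((x ∈ T ∧ ¬(x = s ∨ (Mx + 1 - s ≤ x ∧ x ≤ Mx))) ∨ (Mx + 2 - s ≤ x ∧ x ≤ Mx + 1)) := by
    intro x
    rw [hT'def]
    simp only [Finset.mem_union, Finset.mem_sdiff, Finset.mem_insert, Finset.mem_Icc]
  have hub' : ∀ x ∈ T', x ≤ Mx + 1 := by
    intro x hx
    rcases (hmemT' x).mp hx with ⟨hxT, -⟩ | ⟨-, h⟩
    · exact (hub x hxT).trans (Nat.le_succ Mx)
    · exact h
  have hmem1 : Mx + 1 ∈ T' := (hmemT' _).mpr (Or.inr ⟨by omega, by omega⟩)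
  have hne' : T'.Nonempty := ⟨Mx + 1, hmem1⟩
  have hmax' : T'.max' hne' = Mx + 1 :=
    le_antisymm (Finset.max'_le _ _ _ hub') (Finset.le_max' _ _ hmem1)
  have hlb' : ∀ x ∈ T', s + 1 ≤ x := by
    intro x hx
    rcases (hmemT' x).mp hx with ⟨hxT, hn⟩ | ⟨h, -⟩
    · have := hlb x hxT; omega
    · omega
  have h0' : 0 ∉ T' := fun h => by have := hlb' 0 h; omega
  have hrB' : rBot T' (Mx + 1) = Mx + 2 - s := by
    refine rBot_eq ?_ ?_ (by omega) (by omega)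
    · intro x hx
      rw [Finset.mem_Icc] at hx
      exact (hmemT' x).mpr (Or.inr hx)
    · intro hmem
      rcases (hmemT' _).mp hmem with ⟨-, hn⟩ | ⟨h, -⟩ <;> omega
  have hfrk2 : frk T' = T := by
    unfold frk
    rw [dif_pos hne', hmax', hrB', if_neg (by have := Finset.le_min' T' hne' (s + 1) hlb'; omega)]
    have e1 : Mx + 2 - s - 1 = Mx + 1 - s := by omega
    have e2 : Mx + 1 - 1 = Mx := by omega
    have e3 : Mx + 1 + 1 - (Mx + 2 - s) = s := by omega
    rw [e1, e2, e3]
    ext x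
    simp only [Finset.mem_union, Finset.mem_sdiff, Finset.mem_singleton, Finset.mem_Icc,
      hmemT' x]
    constructor
    · rintro ((⟨hT', hn2⟩ | hI1) | rfl)
      · rcases hT' with ⟨hxT, -⟩ | hI2
        · exact hxT
        · exact absurd hI2 hn2
      · exact hI₁T (Finset.mem_Icc.mpr hI1)
      · exact hsmem
    · intro hxT
      have hxu := hub x hxT
      have hxl := hlb x hxT
      by_cases h1 : x = s
      · exact Or.inr h1
      by_cases h2 : Mx + 1 - s ≤ x ∧ x ≤ Mx
      · exact Or.inl (Or.inr h2)
      · refine Or.inl (Or.inl ⟨Or.inl ⟨hxT, ?_⟩, ?_⟩) <;> omega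
  have hsum : T'.sum id = T.sum id := by
    have hd1 : Disjoint (T \ insert s (Finset.Icc (Mx + 1 - s) Mx))
        (Finset.Icc (Mx + 2 - s) (Mx + 1)) := by
      rw [Finset.disjoint_left]
      intro x hx hx2
      rw [Finset.mem_sdiff, Finset.mem_insert] at hx
      rw [Finset.mem_Icc] at hx2
      push_neg at hx
      have := hub x hx.1
      have := hx.2.2
      rw [Finset.mem_Icc] at this
      omega
    rw [hT'def, Finset.sum_union hd1]
    conv_rhs => rw [(Finset.sdiff_union_of_subset hins).symm]
    rw [Finset.sum_union Finset.sdiff_disjoint]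
    congr 1
    rw [Finset.sum_insert (by rw [Finset.mem_Icc]; omega)]
    have := shift_sum (Mx + 2 - s) (Mx + 1) (by omega) (by omega)
    rw [this]
    have e1 : Mx + 2 - s - 1 = Mx + 1 - s := by omega
    have e2 : Mx + 1 - 1 = Mx := by omega
    have e3 : Mx + 1 + 1 - (Mx + 2 - s) = s := by omega
    rw [e1, e2, e3]
    simp only [id_eq]
    omega
  refine ⟨?_, by rw [hfrkT]; exact hsum, ?_, by rw [hfrkT]; exact hfrk2⟩
  · rw [hfrkT]
    intro heq
    have := hub (Mx + 1) (heq ▸ hmem1)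
    omega
  · rw [hfrkT]
    intro x hx
    have := hlb' x hx
    omega

lemma stepII {T : Finset ℕ} {s Mx r : ℕ} (hne : T.Nonempty) (h0 : 0 ∉ T)
    (hs : T.min' hne = s) (hM : T.max' hne = Mx) (hr : rBot T Mx = r)
    (hc : Mx + 2 ≤ s + r) (h2r : Mx + 3 ≤ 2 * r) :
    frk T ≠ T ∧ (frk T).sum id = T.sum id ∧ (∀ x ∈ frk T, 1 ≤ x) ∧ frk (frk T) = T := by
  have hsmem : s ∈ T := hs ▸ T.min'_mem hne
  have hMmem : Mx ∈ T := hM ▸ T.max'_mem hne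
  have hs1 : 1 ≤ s := Nat.one_le_iff_ne_zero.mpr (fun h => h0 (h ▸ hsmem))
  have hub : ∀ x ∈ T, x ≤ Mx := fun x hx => hM ▸ T.le_max' x hx
  have hlb : ∀ x ∈ T, s ≤ x := fun x hx => hs ▸ T.min'_le x hx
  have hsM : s ≤ Mx := hub s hsmem
  have hrun : Finset.Icc r Mx ⊆ T := hr ▸ rBot_subset T Mx
  have hrM : r ≤ Mx := by
    have h : Finset.Icc Mx Mx ⊆ T := by
      rw [Finset.Icc_self, Finset.singleton_subset_iff]; exact hMmem
    have := rBot_le h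
    omega
  have hsr : s ≤ r := hlb r (hrun (Finset.mem_Icc.mpr ⟨le_refl r, hrM⟩))
  have hr0 : r - 1 ∉ T := hr ▸ rBot_pred_not_mem h0
  have hr2 : 2 ≤ r := by omega
  have hBub : ∀ x ∈ T, ¬(r ≤ x ∧ x ≤ Mx) → x ≤ r - 2 := by
    intro x hx hn
    have h1 := hub x hx
    have h2 : x ≠ r - 1 := fun e => hr0 (e ▸ hx)
    omega
  set T'' : Finset ℕ := ((T \ Finset.Icc r Mx) ∪ Finset.Icc (r - 1) (Mx - 1)) ∪ {Mx + 1 - r}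
    with hT''def
  have hfrkT : frk T = T'' := by
    unfold frk
    rw [dif_pos hne, hs, hM, hr, if_neg (by omega)]
  have hmemT'' : ∀ x, x ∈ T'' ↔
      (((x ∈ T ∧ ¬(r ≤ x ∧ x ≤ Mx)) ∨ (r - 1 ≤ x ∧ x ≤ Mx - 1)) ∨ x = Mx + 1 - r) := by
    intro x
    rw [hT''def]
    simp only [Finset.mem_union, Finset.mem_sdiff, Finset.mem_Icc, Finset.mem_singleton]
  have hub'' : ∀ x ∈ T'', x ≤ Mx - 1 := by
    intro x hx
    rcases (hmemT'' x).mp hx with (⟨hxT, hn⟩ | ⟨-, h⟩) | rfl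
    · have := hBub x hxT hn; omega
    · exact h
    · omega
  have hmemM : Mx - 1 ∈ T'' := (hmemT'' _).mpr (Or.inl (Or.inr (by omega)))
  have hne'' : T''.Nonempty := ⟨Mx - 1, hmemM⟩
  have hmax'' : T''.max' hne'' = Mx - 1 :=
    le_antisymm (Finset.max'_le _ _ _ hub'') (Finset.le_max' _ _ hmemM)
  have hmemt : Mx + 1 - r ∈ T'' := (hmemT'' _).mpr (Or.inr rfl)
  have hlb'' : ∀ x ∈ T'', Mx + 1 - r ≤ x := by
    intro x hx
    rcases (hmemT'' x).mp hx with (⟨hxT, -⟩ | ⟨h, -⟩) | rfl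
    · have := hlb x hxT; omega
    · omega
    · omega
  have hmin'' : T''.min' hne'' = Mx + 1 - r :=
    le_antisymm (Finset.min'_le _ _ hmemt) (Finset.le_min' _ _ _ hlb'')
  have h0'' : 0 ∉ T'' := fun h => by have := hlb'' 0 h; omega
  have hrBle : rBot T'' (Mx - 1) ≤ r - 1 :=
    rBot_le (fun x hx => (hmemT'' x).mpr (Or.inl (Or.inr (Finset.mem_Icc.mp hx))))
  have hfrk2 : frk T'' = T := by
    unfold frk
    rw [dif_pos hne'', hmax'', hmin'', if_pos (by omega)]
    have e1 : Mx - 1 + 1 - (Mx + 1 - r) = r - 1 := by omega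
    have e2 : Mx - 1 + 2 - (Mx + 1 - r) = r := by omega
    have e3 : Mx - 1 + 1 = Mx := by omega
    rw [e1, e2, e3]
    ext x
    simp only [Finset.mem_union, Finset.mem_sdiff, Finset.mem_insert, Finset.mem_Icc,
      hmemT'' x]
    constructor
    · rintro (⟨hT'', hnot⟩ | hI)
      · rcases hT'' with (⟨hxT, -⟩ | hI') | heq
        · exact hxT
        · exact absurd (Or.inr hI') hnot
        · exact absurd (Or.inl heq) hnot
      · exact hrun (Finset.mem_Icc.mpr hI)
    · intro hxT
      by_cases h1 : r ≤ x ∧ x ≤ Mx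
      · exact Or.inr h1
      · have hxu := hub x hxT
        have hxl := hlb x hxT
        have hx2 := hBub x hxT h1
        exact Or.inl ⟨Or.inl (Or.inl ⟨hxT, h1⟩), by omega⟩
  have hsum : T''.sum id = T.sum id := by
    have hd1 : Disjoint (T \ Finset.Icc r Mx) (Finset.Icc (r - 1) (Mx - 1)) := by
      rw [Finset.disjoint_left]
      intro x hx hx2
      rw [Finset.mem_sdiff] at hx
      rw [Finset.mem_Icc] at hx2
      rw [Finset.mem_Icc] at hx
      have := hBub x hx.1 hx.2
      omega
    have hd2 : Disjoint ((T \ Finset.Icc r Mx) ∪ Finset.Icc (r - 1) (Mx - 1)) {Mx + 1 - r} := by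
      rw [Finset.disjoint_right]
      intro x hx hx2
      rw [Finset.mem_singleton] at hx
      subst hx
      rcases Finset.mem_union.mp hx2 with h | h
      · rw [Finset.mem_sdiff, Finset.mem_Icc] at h
        have := hlb _ h.1
        have := hBub _ h.1 h.2
        omega
      · rw [Finset.mem_Icc] at h; omega
    rw [hT''def, Finset.sum_union hd2, Finset.sum_union hd1]
    conv_rhs => rw [(Finset.sdiff_union_of_subset hrun).symm]
    rw [Finset.sum_union Finset.sdiff_disjoint]
    rw [shift_sum r Mx (by omega) hrM]
    simp only [Finset.sum_singleton, id_eq]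
    omega
  refine ⟨?_, by rw [hfrkT]; exact hsum, ?_, by rw [hfrkT]; exact hfrk2⟩
  · rw [hfrkT]
    intro heq
    have := hub'' Mx (heq.symm ▸ hMmem)
    omega
  · rw [hfrkT]
    intro x hx
    have := hlb'' x hx
    omega

lemma gauss (s Mx : ℕ) (h : s ≤ Mx) :
    2 * (∑ x ∈ Finset.Icc s Mx, x) + s * (s - 1) = (Mx + 1) * Mx := by
  have h1 := Finset.sum_range_id_mul_two (Mx + 1)
  have h2 := Finset.sum_range_id_mul_two s
  have h3 : (∑ x ∈ Finset.range s, x) + ∑ x ∈ Finset.Ico s (Mx + 1), x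
      = ∑ x ∈ Finset.range (Mx + 1), x := by
    rw [Finset.range_eq_Ico, Finset.range_eq_Ico]
    exact Finset.sum_Ico_consecutive (fun x : ℕ => x) (Nat.zero_le s) (show s ≤ Mx + 1 by omega)
  rw [Finset.Ico_add_one_right_eq_Icc] at h3
  simp only [Nat.add_sub_cancel] at h1
  linarith

lemma frk_good {n M : ℕ} (hnM : n ≤ M) (hsq : ∀ m : ℕ, m * m ≠ 24 * n + 1) {T : Finset ℕ}
    (hT : T ∈ (Finset.Icc 1 M).powerset.filter (fun T => T.sum id = n)) :
    frk T ∈ (Finset.Icc 1 M).powerset.filter (fun T => T.sum id = n) ∧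
      frk T ≠ T ∧ frk (frk T) = T := by
  rw [Finset.mem_filter, Finset.mem_powerset] at hT
  obtain ⟨hsub, hsum⟩ := hT
  have h0 : 0 ∉ T := fun h => by simpa using (Finset.mem_Icc.mp (hsub h)).1
  have hn1 : n ≠ 0 := fun h => hsq 1 (by omega)
  have hne : T.Nonempty := by
    rcases T.eq_empty_or_nonempty with rfl | h
    · simp only [Finset.sum_empty] at hsum
      exact absurd hsum.symm hn1
    · exact h
  obtain ⟨s, hs⟩ : ∃ s, T.min' hne = s := ⟨_, rfl⟩
  obtain ⟨Mx, hM⟩ : ∃ m, T.max' hne = m := ⟨_, rfl⟩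
  obtain ⟨r, hr⟩ : ∃ r, rBot T Mx = r := ⟨_, rfl⟩
  have hsmem : s ∈ T := hs ▸ T.min'_mem hne
  have hMmem : Mx ∈ T := hM ▸ T.max'_mem hne
  have hs1 : 1 ≤ s := Nat.one_le_iff_ne_zero.mpr (fun h => h0 (h ▸ hsmem))
  have hub : ∀ x ∈ T, x ≤ Mx := fun x hx => hM ▸ T.le_max' x hx
  have hlb : ∀ x ∈ T, s ≤ x := fun x hx => hs ▸ T.min'_le x hx
  have hsM : s ≤ Mx := hub s hsmem
  have hrun : Finset.Icc r Mx ⊆ T := hr ▸ rBot_subset T Mx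
  have hrM : r ≤ Mx := by
    have h : Finset.Icc Mx Mx ⊆ T := by
      rw [Finset.Icc_self, Finset.singleton_subset_iff]; exact hMmem
    have := hr ▸ rBot_le h
    omega
  have hsr : s ≤ r := hlb r (hrun (Finset.mem_Icc.mpr ⟨le_refl r, hrM⟩))
  have key : frk T ≠ T ∧ (frk T).sum id = T.sum id ∧
      (∀ x ∈ frk T, 1 ≤ x) ∧ frk (frk T) = T := by
    by_cases hc : s + r ≤ Mx + 1
    · -- case I; rule out the staircase via hsq
      have h2s : 2 * s ≤ Mx := by
        by_contra h2s'
        push_neg at h2s'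
        have hTeq : T = Finset.Icc s Mx := by
          ext x
          rw [Finset.mem_Icc]
          constructor
          · intro hx; exact ⟨hlb x hx, hub x hx⟩
          · intro hx
            exact hrun (Finset.mem_Icc.mpr ⟨by omega, hx.2⟩)
        have hrs : r ≤ s := by
          have : Finset.Icc s Mx ⊆ T := by rw [hTeq]
          have := hr ▸ rBot_le this
          omega
        have h2seq : 2 * s = Mx + 1 := by omega
        have hn' : ∑ x ∈ Finset.Icc s Mx, x = n := by
          rw [← hsum, hTeq]; rfl
        have hg := gauss s Mx hsM
        rw [hn'] at hg
        obtain ⟨v, rfl⟩ : ∃ v, s = v + 1 := ⟨s - 1, by omega⟩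
        have hMx' : Mx = 2 * v + 1 := by omega
        subst hMx'
        refine hsq (6 * v + 5) ?_
        simp only [Nat.add_sub_cancel] at hg
        ring_nf at hg ⊢
        linarith
      exact stepI hne h0 hs hM hr hc h2s
    · -- case II; rule out the staircase via hsq
      push_neg at hc
      have hc' : Mx + 2 ≤ s + r := hc
      have h2r : Mx + 3 ≤ 2 * r := by
        by_contra h2r'
        push_neg at h2r'
        have hsr' : s = r := by omega
        have h2req : 2 * r = Mx + 2 := by omega
        have hTeq : T = Finset.Icc s Mx := by
          ext x
          rw [Finset.mem_Icc]
          constructor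
          · intro hx; exact ⟨hlb x hx, hub x hx⟩
          · intro hx
            exact hrun (Finset.mem_Icc.mpr ⟨by omega, hx.2⟩)
        have hn' : ∑ x ∈ Finset.Icc s Mx, x = n := by
          rw [← hsum, hTeq]; rfl
        have hg := gauss s Mx hsM
        rw [hn'] at hg
        have hs2 : 2 ≤ s := by omega
        obtain ⟨v, rfl⟩ : ∃ v, s = v + 2 := ⟨s - 2, by omega⟩
        have hMx' : Mx = 2 * v + 2 := by omega
        subst hMx'
        refine hsq (6 * v + 7) ?_
        have e : v + 2 - 1 = v + 1 := rfl
        rw [e] at hg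
        ring_nf at hg ⊢
        linarith
      exact stepII hne h0 hs hM hr hc' h2r
  obtain ⟨k1, k2, k3, k4⟩ := key
  refine ⟨?_, k1, k4⟩
  rw [Finset.mem_filter, Finset.mem_powerset]
  constructor
  · intro x hx
    rw [Finset.mem_Icc]
    refine ⟨k3 x hx, ?_⟩
    have hxle : id x ≤ (frk T).sum id :=
      Finset.single_le_sum (fun i _ => Nat.zero_le (id i)) hx
    rw [k2, hsum] at hxle
    exact le_trans hxle hnM
  · rw [k2, hsum]

lemma franklin (n M : ℕ) (hnM : n ≤ M) (hsq : ∀ m : ℕ, m * m ≠ 24 * n + 1) :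
    ∑ T ∈ (Finset.Icc 1 M).powerset.filter (fun T => T.sum id = n), (1 : ZMod 2) = 0 := by
  refine Finset.sum_involution (fun T _ => frk T) (fun T hT => by decide)
    (fun T hT _ => (frk_good hnM hsq hT).2.1)
    (fun T hT => (frk_good hnM hsq hT).1)
    (fun T hT => (frk_good hnM hsq hT).2.2)


lemma coeff_f_eq (k n M : ℕ) (hk : 1 ≤ k) (hM : n + 1 ≤ M) :
    (PowerSeries.coeff n) (f k) =
      (PowerSeries.coeff n)
        (∏ m ∈ Finset.range M, (1 - (PowerSeries.X : PowerSeries ℤ) ^ (k * (m + 1)))) := by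
  induction M, hM using Nat.le_induction with
  | base => simp [f, PowerSeries.coeff_mk]
  | succ M hM ih =>
    rw [Finset.prod_range_succ, mul_sub, mul_one, map_sub, PowerSeries.coeff_mul_X_pow',
      if_neg (by have : M + 1 ≤ k * (M + 1) := Nat.le_mul_of_pos_left _ (by omega); omega),
      sub_zero, ih]

lemma coeff_mul_congr {R : Type*} [CommSemiring R] {a a' b b' : PowerSeries R} {n : ℕ}
    (ha : ∀ i ≤ n, PowerSeries.coeff i a = PowerSeries.coeff i a')
    (hb : ∀ i ≤ n, PowerSeries.coeff i b = PowerSeries.coeff i b') :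
    PowerSeries.coeff n (a * b) = PowerSeries.coeff n (a' * b') := by
  rw [PowerSeries.coeff_mul, PowerSeries.coeff_mul]
  refine Finset.sum_congr rfl fun x hx => ?_
  rw [Finset.HasAntidiagonal.mem_antidiagonal] at hx
  rw [ha x.1 (by omega), hb x.2 (by omega)]

lemma coeff_pow_congr {R : Type*} [CommSemiring R] {a a' : PowerSeries R} {n : ℕ}
    (h : ∀ i ≤ n, PowerSeries.coeff i a = PowerSeries.coeff i a') (e : ℕ) :
    ∀ i ≤ n, PowerSeries.coeff i (a ^ e) = PowerSeries.coeff i (a' ^ e) := by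
  induction e with
  | zero => intro i _; rw [pow_zero, pow_zero]
  | succ e ih =>
    intro i hi
    rw [pow_succ, pow_succ]
    exact coeff_mul_congr (fun j hj => ih j (hj.trans hi)) (fun j hj => h j (hj.trans hi))

lemma two_eq_zero : (2 : PowerSeries (ZMod 2)) = 0 := by
  rw [← map_ofNat (PowerSeries.C (R := ZMod 2)) 2, show (2 : ZMod 2) = 0 from rfl, map_zero]

lemma one_sub_sq (Y : PowerSeries (ZMod 2)) : (1 - Y) ^ 2 = 1 - Y ^ 2 := by
  linear_combination (Y ^ 2 - Y) * two_eq_zero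

lemma one_sub_pow4 (Y : PowerSeries (ZMod 2)) : (1 - Y) ^ 4 = 1 + Y ^ 4 := by
  linear_combination (3 * Y ^ 2 - 2 * Y - 2 * Y ^ 3) * two_eq_zero

lemma constCoeff_f2 : PowerSeries.constantCoeff (f 2) = 1 := by
  rw [← PowerSeries.coeff_zero_eq_constantCoeff, coeff_f_eq 2 0 1 (by norm_num) (le_refl 1)]
  simp [Finset.prod_range_one, PowerSeries.coeff_X_pow]
theorem b_congruence_mod_two (b : ℕ → ℤ)
    (hb : PowerSeries.mk b = f 4 ^ 3 * finv 2 ^ 2)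
    (p : ℕ) (hp : p.Prime) (hp5 : 5 ≤ p) (α : ℕ) (hα : 1 ≤ α)
    (n : ℕ) (j : ℕ) (hj1 : 1 ≤ j) (hjp : j ≤ p - 1) :
    (2 : ℤ) ∣ b (p ^ (2 * α) * n + ((3 * j + p) * p ^ (2 * α - 1) - 1) / 3) := by
  have hppos : 0 < p := hp.pos
  have hq1 : 1 ≤ p ^ (2 * α - 1) := Nat.one_le_pow _ _ hppos
  have hp3 : ¬ (3 ∣ p) := by
    intro h
    have := (Nat.prime_dvd_prime_iff_eq (by norm_num) hp).mp h
    omega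
  have hpmod : p % 3 = 1 ∨ p % 3 = 2 := by omega
  have hp2mod : p ^ 2 % 3 = 1 := by
    rw [Nat.pow_mod]
    rcases hpmod with h | h <;> rw [h] <;> rfl
  have hQmod : p ^ (2 * α) % 3 = 1 := by
    rw [pow_mul, Nat.pow_mod, hp2mod, one_pow]
    omega
  have hqp : p ^ (2 * α - 1) * p = p ^ (2 * α) := by
    rw [← pow_succ]
    congr 1
    omega
  have hDmod : ((3 * j + p) * p ^ (2 * α - 1)) % 3 = 1 := by
    have h1 : (3 * j + p) % 3 = p % 3 := by omega
    calc ((3 * j + p) * p ^ (2 * α - 1)) % 3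
        = ((3 * j + p) % 3) * (p ^ (2 * α - 1) % 3) % 3 := Nat.mul_mod _ _ _
      _ = (p % 3) * (p ^ (2 * α - 1) % 3) % 3 := by rw [h1]
      _ = (p * p ^ (2 * α - 1)) % 3 := (Nat.mul_mod _ _ _).symm
      _ = 1 := by rw [mul_comm, hqp, hQmod]
  have hD1 : 1 ≤ (3 * j + p) * p ^ (2 * α - 1) := by
    have := Nat.mul_le_mul (show 1 ≤ 3 * j + p by omega) hq1
    omega
  set N := p ^ (2 * α) * n + ((3 * j + p) * p ^ (2 * α - 1) - 1) / 3 with hNdef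
  have hN3 : 3 * N + 1 = p ^ (2 * α - 1) * (3 * p * n + 3 * j + p) := by
    have e1 : p ^ (2 * α - 1) * (3 * p * n + 3 * j + p)
        = 3 * (p ^ (2 * α - 1) * p * n) + (3 * j + p) * p ^ (2 * α - 1) := by ring
    rw [e1, hqp, hNdef]
    generalize hE : p ^ (2 * α) * n = E
    generalize hD : (3 * j + p) * p ^ (2 * α - 1) = D
    rw [hD] at hDmod hD1
    omega
  have hmain : ∀ m : ℕ, m * m ≠ 3 * N + 1 := by
    intro m hm
    rw [hN3] at hm
    have hupos : 0 < 3 * p * n + 3 * j + p := by positivity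
    have hu0 : 3 * p * n + 3 * j + p ≠ 0 := hupos.ne'
    have hm0 : m ≠ 0 := by
      intro h
      rw [h] at hm
      have : 0 < p ^ (2 * α - 1) * (3 * p * n + 3 * j + p) :=
        Nat.mul_pos (pow_pos hppos _) hupos
      omega
    have hpu : ¬ p ∣ (3 * p * n + 3 * j + p) := by
      intro hdvd
      have e : 3 * p * n + 3 * j + p = p * (3 * n + 1) + 3 * j := by ring
      rw [e] at hdvd
      have h3j : p ∣ 3 * j := (Nat.dvd_add_right ⟨3 * n + 1, rfl⟩).mp hdvd
      rcases (Nat.Prime.dvd_mul hp).mp h3j with h | h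
      · have := Nat.le_of_dvd (by norm_num) h; omega
      · have := Nat.le_of_dvd (by omega) h; omega
    have h1 : (m * m).factorization p = 2 * m.factorization p := by
      rw [Nat.factorization_mul hm0 hm0]
      simp [two_mul]
    have h2 : (p ^ (2 * α - 1) * (3 * p * n + 3 * j + p)).factorization p = 2 * α - 1 := by
      rw [Nat.factorization_mul (pow_ne_zero _ hppos.ne') hu0]
      simp [Nat.Prime.factorization_pow hp, Nat.factorization_eq_zero_of_not_dvd hpu]
    rw [hm, h2] at h1
    omega
  -- power series part
  suffices hZ : ((b N : ZMod 2)) = 0 by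
    have h2 := (ZMod.intCast_zmod_eq_zero_iff_dvd (b N) 2).mp hZ
    exact_mod_cast h2
  have hunit0 : f 2 * finv 2 = 1 :=
    PowerSeries.mul_invOfUnit (f 2) 1 (by rw [constCoeff_f2]; simp)
  have hunit : PowerSeries.map (Int.castRingHom (ZMod 2)) (f 2) *
      PowerSeries.map (Int.castRingHom (ZMod 2)) (finv 2) = 1 := by
    rw [← map_mul, hunit0, map_one]
  have hF4 : PowerSeries.map (Int.castRingHom (ZMod 2)) (f 4) =
      (PowerSeries.map (Int.castRingHom (ZMod 2)) (f 2)) ^ 2 := by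
    ext K
    have hL : PowerSeries.coeff K (PowerSeries.map (Int.castRingHom (ZMod 2)) (f 4)) =
        PowerSeries.coeff K
          (∏ m ∈ Finset.range (K + 1),
            (1 - (PowerSeries.X : PowerSeries (ZMod 2)) ^ (4 * (m + 1)))) := by
      rw [PowerSeries.coeff_map, coeff_f_eq 4 K (K + 1) (by norm_num) le_rfl,
        ← PowerSeries.coeff_map]
      congr 1
      rw [map_prod]
      refine Finset.prod_congr rfl fun m _ => ?_
      simp
    have hagree : ∀ i ≤ K,
        PowerSeries.coeff i (PowerSeries.map (Int.castRingHom (ZMod 2)) (f 2)) =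
        PowerSeries.coeff i
          (∏ m ∈ Finset.range (K + 1),
            (1 - (PowerSeries.X : PowerSeries (ZMod 2)) ^ (2 * (m + 1)))) := by
      intro i hi
      rw [PowerSeries.coeff_map, coeff_f_eq 2 i (K + 1) (by norm_num) (by omega),
        ← PowerSeries.coeff_map]
      congr 1
      rw [map_prod]
      refine Finset.prod_congr rfl fun m _ => ?_
      simp
    rw [hL, coeff_pow_congr hagree 2 K le_rfl]
    congr 1
    rw [← Finset.prod_pow]
    refine Finset.prod_congr rfl fun m _ => ?_
    rw [one_sub_sq, ← pow_mul, show 2 * (m + 1) * 2 = 4 * (m + 1) from by ring]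
  have hkey : PowerSeries.map (Int.castRingHom (ZMod 2)) (PowerSeries.mk b) =
      (PowerSeries.map (Int.castRingHom (ZMod 2)) (f 2)) ^ 4 := by
    rw [hb, map_mul, map_pow, map_pow, hF4]
    calc ((PowerSeries.map (Int.castRingHom (ZMod 2)) (f 2)) ^ 2) ^ 3 *
          (PowerSeries.map (Int.castRingHom (ZMod 2)) (finv 2)) ^ 2
        = (PowerSeries.map (Int.castRingHom (ZMod 2)) (f 2)) ^ 4 *
          (PowerSeries.map (Int.castRingHom (ZMod 2)) (f 2) *
            PowerSeries.map (Int.castRingHom (ZMod 2)) (finv 2)) ^ 2 := by ring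
      _ = (PowerSeries.map (Int.castRingHom (ZMod 2)) (f 2)) ^ 4 := by
          rw [hunit, one_pow, mul_one]
  have hco : ((b N : ZMod 2)) =
      PowerSeries.coeff N
        (PowerSeries.map (Int.castRingHom (ZMod 2)) (PowerSeries.mk b)) := by
    rw [PowerSeries.coeff_map, PowerSeries.coeff_mk]
    rfl
  rw [hco, hkey]
  have hagreeN : ∀ i ≤ N,
      PowerSeries.coeff i (PowerSeries.map (Int.castRingHom (ZMod 2)) (f 2)) =
      PowerSeries.coeff i
        (∏ m ∈ Finset.range (N + 1),
          (1 - (PowerSeries.X : PowerSeries (ZMod 2)) ^ (2 * (m + 1)))) := by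
    intro i hi
    rw [PowerSeries.coeff_map, coeff_f_eq 2 i (N + 1) (by norm_num) (by omega),
      ← PowerSeries.coeff_map]
    congr 1
    rw [map_prod]
    refine Finset.prod_congr rfl fun m _ => ?_
    simp
  rw [coeff_pow_congr hagreeN 4 N le_rfl]
  have hprod : (∏ m ∈ Finset.range (N + 1),
      (1 - (PowerSeries.X : PowerSeries (ZMod 2)) ^ (2 * (m + 1)))) ^ 4 =
      ∏ m ∈ Finset.range (N + 1),
        ((PowerSeries.X : PowerSeries (ZMod 2)) ^ (8 * (m + 1)) + 1) := by
    rw [← Finset.prod_pow]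
    refine Finset.prod_congr rfl fun m _ => ?_
    rw [one_sub_pow4, ← pow_mul, show 2 * (m + 1) * 4 = 8 * (m + 1) from by ring, add_comm]
  rw [hprod, Finset.prod_add]
  simp only [Finset.prod_const_one, mul_one, Finset.prod_pow_eq_pow_sum]
  rw [map_sum]
  simp only [PowerSeries.coeff_X_pow]
  by_cases h8 : 8 ∣ N
  · obtain ⟨n', hn'⟩ := h8
    have hsq' : ∀ m : ℕ, m * m ≠ 24 * n' + 1 := by
      intro m hm
      have he : 24 * n' + 1 = 3 * N + 1 := by omega
      exact hmain m (hm.trans he)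
    have hfr := franklin n' (N + 1) (by omega) hsq'
    rw [Finset.sum_filter] at hfr
    refine Eq.trans ?_ hfr
    refine Finset.sum_nbij' (i := fun S => S.image (· + 1)) (j := fun T => T.image (· - 1))
      ?_ ?_ ?_ ?_ ?_
    · intro S hS
      rw [Finset.mem_powerset] at hS ⊢
      intro x hx
      obtain ⟨y, hy, rfl⟩ := Finset.mem_image.mp hx
      have := Finset.mem_range.mp (hS hy)
      rw [Finset.mem_Icc]
      omega
    · intro T hT
      rw [Finset.mem_powerset] at hT ⊢
      intro x hx
      obtain ⟨y, hy, rfl⟩ := Finset.mem_image.mp hx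
      have := Finset.mem_Icc.mp (hT hy)
      rw [Finset.mem_range]
      omega
    · intro S _
      rw [Finset.image_image]
      have e : ((fun x => x - 1) ∘ (fun x => x + 1)) = id := by
        funext x; simp
      rw [e, Finset.image_id]
    · intro T hT
      rw [Finset.mem_powerset] at hT
      rw [Finset.image_image]
      ext a
      simp only [Finset.mem_image, Function.comp_apply]
      constructor
      · rintro ⟨x, hx, rfl⟩
        have := Finset.mem_Icc.mp (hT hx)
        have e : x - 1 + 1 = x := by omega
        rwa [e]
      · intro ha
        exact ⟨a, ha, by have := Finset.mem_Icc.mp (hT ha); omega⟩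
    · intro S _
      rw [Finset.sum_image (g := fun x => x + 1) (by intro a _ b _ h; simpa using h)]
      simp only [id_eq]
      have he : (∑ i ∈ S, 8 * (i + 1)) = 8 * ∑ i ∈ S, (i + 1) := by
        rw [Finset.mul_sum]
      rw [he]
      exact if_congr (by omega) rfl rfl
  · refine Finset.sum_eq_zero fun t _ => ?_
    rw [if_neg]
    intro heq
    exact h8 ⟨∑ i ∈ t, (i + 1), by rw [heq, Finset.mul_sum]⟩
end

section
/- Let p ≥ 5 be prime, α ≥ 1, and let d(n) be defined by ∑_{n≥0} d(n)qⁿ = f₃³/(f₁·f₂). Then for all n ≥ 0 and all j with 1 ≤ j ≤ p−1, d(6p^{2α}·n + ((24j+p)·p^{2α−1} − 1)/4) ≡ 0 (mod 3). -/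
open PowerSeries

open Finset

section Infra
variable {R : Type*} [CommRing R]

/-- coeff of P * X^t * s vanishes below t -/
lemma coeff_mul_one_sub_X_pow_mul (P s : PowerSeries R) (M t : ℕ) (h : M < t) :
    coeff M (P * (1 - X ^ t * s)) = coeff M P := by
  rw [mul_sub, mul_one, map_sub]
  have : P * (X ^ t * s) = X ^ t * (P * s) := by ring
  rw [this, PowerSeries.coeff_X_pow_mul']
  simp [Nat.not_le_of_lt h]

lemma coeff_mul_one_sub_X_pow (P : PowerSeries R) (M t : ℕ) (h : M < t) :
    coeff M (P * (1 - X ^ t)) = coeff M P := by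
  have := coeff_mul_one_sub_X_pow_mul P 1 M t h
  simpa using this

/-- stability: multiplying by factors (1 - X^(t i)) with all t i > M doesn't change coeff M -/
lemma coeff_mul_prod_one_sub (P : PowerSeries R) (M : ℕ) {ι : Type*} [DecidableEq ι] (s : Finset ι) (t : ι → ℕ)
    (ht : ∀ i ∈ s, M < t i) :
    coeff M (P * ∏ i ∈ s, (1 - X ^ t i)) = coeff M P := by
  induction s using Finset.induction_on with
  | empty => simp
  | @insert a s' hx ih =>
      rw [Finset.prod_insert hx, show P * ((1 - X ^ t a) * ∏ i ∈ s', (1 - X ^ t i)) =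
        (P * ∏ i ∈ s', (1 - X ^ t i)) * (1 - X ^ t a) by ring,
        coeff_mul_one_sub_X_pow _ _ _ (ht a (Finset.mem_insert_self a s'))]
      exact ih fun i hi => ht i (Finset.mem_insert_of_mem hi)

lemma coeff_prod_one_sub (M : ℕ) {ι : Type*} [DecidableEq ι] (s : Finset ι) (t : ι → ℕ)
    (ht : ∀ i ∈ s, M < t i) (hM : 0 < M) :
    coeff (R := R) M (∏ i ∈ s, (1 - X ^ t i)) = 0 := by
  have := coeff_mul_prod_one_sub (1 : PowerSeries R) M s t ht
  rw [one_mul] at this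
  rw [this, coeff_one, if_neg (Nat.pos_iff_ne_zero.mp hM)]

lemma coeff_mul_congr_s5 (A A' B B' : PowerSeries R) (n : ℕ)
    (hA : ∀ i ≤ n, coeff i A = coeff i A') (hB : ∀ i ≤ n, coeff i B = coeff i B') :
    coeff n (A * B) = coeff n (A' * B') := by
  rw [coeff_mul, coeff_mul]
  refine Finset.sum_congr rfl fun p hp => ?_
  rw [Finset.HasAntidiagonal.mem_antidiagonal] at hp
  rw [hA p.1 (by omega), hB p.2 (by omega)]

end Infra

noncomputable def pprod (g : ℕ → ℕ) : PowerSeries ℤ :=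
  PowerSeries.mk fun n =>
    PowerSeries.coeff n (∏ m ∈ Finset.range (n + 1), (1 - (PowerSeries.X : PowerSeries ℤ) ^ (g m)))

lemma pprod_spec (g : ℕ → ℕ) (hg : ∀ m, m + 1 ≤ g m) (n s : ℕ) (hs : n + 1 ≤ s) :
    coeff n (pprod g) = coeff n (∏ m ∈ range s, (1 - (X : PowerSeries ℤ) ^ g m)) := by
  have h : (∏ m ∈ range s, (1 - (X : PowerSeries ℤ) ^ g m)) =
      (∏ m ∈ range (n+1), (1 - (X : PowerSeries ℤ) ^ g m)) *
      ∏ i ∈ range (s - (n+1)), (1 - (X : PowerSeries ℤ) ^ g (n+1+i)) := by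
    have hss : n + 1 + (s - (n+1)) = s := by omega
    rw [← Finset.prod_range_add, hss]
  rw [pprod, coeff_mk, h, coeff_mul_prod_one_sub]
  intro i _
  have := hg (n + 1 + i)
  omega

section PolyBridge
variable {R : Type*} [CommRing R]

lemma prod_one_sub_coe {ι : Type*} (s : Finset ι) (t : ι → ℕ) :
    ((∏ i ∈ s, (1 - Polynomial.X ^ (t i)) : Polynomial R) : PowerSeries R)
      = ∏ i ∈ s, (1 - (X : PowerSeries R) ^ (t i)) := by
  rw [← Polynomial.coeToPowerSeries.ringHom_apply, map_prod]
  refine Finset.prod_congr rfl fun i _ => ?_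
  rw [map_sub, map_one, map_pow, Polynomial.coeToPowerSeries.ringHom_apply, Polynomial.coe_X]

end PolyBridge

lemma f_eq_pprod (k : ℕ) : f k = pprod (fun m => k * (m + 1)) := rfl

lemma f_spec (k : ℕ) (hk : 1 ≤ k) (n s : ℕ) (hs : n + 1 ≤ s) :
    coeff n (f k) = coeff n (∏ m ∈ range s, (1 - (X : PowerSeries ℤ) ^ (k * (m+1)))) := by
  rw [f_eq_pprod]
  exact pprod_spec _ (fun m => by nlinarith) n s hs

/-- key structure lemma: `f k` is `f 1` with exponents scaled by `k`. -/
lemma f_coeff (k : ℕ) (hk : 1 ≤ k) (n : ℕ) :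
    coeff n (f k) = if k ∣ n then coeff (n / k) (f 1) else 0 := by
  set P : Polynomial ℤ := ∏ m ∈ range (n + 1), (1 - Polynomial.X ^ (m + 1)) with hP
  have hexp : ((Polynomial.expand ℤ k P : Polynomial ℤ) : PowerSeries ℤ)
      = ∏ m ∈ range (n+1), (1 - (X : PowerSeries ℤ) ^ (k * (m+1))) := by
    have hexp0 : Polynomial.expand ℤ k P = ∏ m ∈ range (n+1), (1 - Polynomial.X ^ (k*(m+1))) := by
      rw [hP, map_prod]
      refine Finset.prod_congr rfl fun m _ => ?_
      rw [map_sub, map_one, map_pow, Polynomial.expand_X, ← pow_mul, mul_comm]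
    rw [hexp0, prod_one_sub_coe]
  have h1 : coeff n (f k) = (Polynomial.expand ℤ k P).coeff n := by
    rw [f, coeff_mk, ← hexp, Polynomial.coeff_coe]
  rw [h1, Polynomial.coeff_expand (by omega : 0 < k)]
  split_ifs with h
  · rw [← Polynomial.coeff_coe, prod_one_sub_coe]
    have := f_spec 1 le_rfl (n / k) (n + 1) (by have := Nat.div_le_self n k; omega)
    simp only [one_mul] at this
    rw [this]
  · rfl

lemma constantCoeff_f (k : ℕ) (hk : 1 ≤ k) : constantCoeff (f k) = 1 := by
  rw [← coeff_zero_eq_constantCoeff, f, coeff_mk]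
  have := coeff_mul_prod_one_sub (1 : PowerSeries ℤ) 0 (range (0+1)) (fun m => k * (m+1))
      (fun i _ => by nlinarith)
  rw [one_mul] at this
  rw [this, coeff_zero_eq_constantCoeff, map_one]

lemma f_mul_finv (k : ℕ) (hk : 1 ≤ k) : f k * finv k = 1 := by
  rw [finv]
  exact PowerSeries.mul_invOfUnit (f k) 1 (by rw [constantCoeff_f k hk, Units.val_one])

section Cube

lemma cube_coeff (g : PowerSeries (ZMod 3)) (n : ℕ) :
    coeff n (g ^ 3) = if 3 ∣ n then coeff (n / 3) g else 0 := by
  haveI : Fact (Nat.Prime 3) := ⟨by norm_num⟩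
  set P := trunc (n + 1) g with hPdef
  have hc : ∀ i ≤ n, coeff i g = coeff i (P : PowerSeries (ZMod 3)) := by
    intro i hi
    rw [Polynomial.coeff_coe, hPdef, coeff_trunc, if_pos (by omega)]
  have h3 : coeff n (g ^ 3) = coeff n ((P : PowerSeries (ZMod 3)) ^ 3) := by
    have hgg : ∀ i ≤ n, coeff i (g * g)
        = coeff i ((P : PowerSeries (ZMod 3)) * (P : PowerSeries (ZMod 3))) := by
      intro i hi
      exact coeff_mul_congr_s5 _ _ _ _ i (fun l hl => hc l (le_trans hl hi))
        (fun l hl => hc l (le_trans hl hi))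
    have e1 : g ^ 3 = g * g * g := by ring
    have e2 : (P : PowerSeries (ZMod 3)) ^ 3
        = (P : PowerSeries (ZMod 3)) * (P : PowerSeries (ZMod 3)) * (P : PowerSeries (ZMod 3)) := by
      ring
    rw [e1, e2]
    exact coeff_mul_congr_s5 _ _ _ _ n (fun l hl => hgg l hl) (fun l hl => hc l hl)
  have hchar : P ^ 3 = Polynomial.expand (ZMod 3) 3 P := by
    have h := Polynomial.map_frobenius_expand 3 P
    rwa [ZMod.frobenius_zmod, Polynomial.map_id, eq_comm] at h
  rw [h3, ← Polynomial.coe_pow, hchar, Polynomial.coeff_coe,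
    Polynomial.coeff_expand (by norm_num : 0 < 3)]
  split_ifs with h
  · rw [hc (n / 3) (Nat.div_le_self n 3), Polynomial.coeff_coe]
  · rfl

lemma fbar_cube (k : ℕ) (hk : 1 ≤ k) :
    (PowerSeries.map (Int.castRingHom (ZMod 3)) (f k)) ^ 3
      = PowerSeries.map (Int.castRingHom (ZMod 3)) (f (3 * k)) := by
  ext n
  rw [cube_coeff, PowerSeries.coeff_map, PowerSeries.coeff_map, f_coeff (3*k) (by omega),
    f_coeff k hk]
  by_cases h3 : 3 ∣ n
  · rw [if_pos h3]
    congr 1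
    by_cases hk3 : k ∣ n / 3
    · have h3k : 3 * k ∣ n := by
        obtain ⟨c, hc⟩ := hk3
        obtain ⟨e, he⟩ := h3
        have he2 : e = k * c := by omega
        exact ⟨c, by rw [he, he2]; ring⟩
      rw [if_pos hk3, if_pos h3k, Nat.div_div_eq_div_mul]
    · have h3k : ¬ (3 * k ∣ n) := by
        intro ⟨c, hc⟩
        have hc2 : n = 3 * (k * c) := by rw [hc]; ring
        exact hk3 ⟨c, by omega⟩
      rw [if_neg hk3, if_neg h3k]
  · have h3k : ¬ (3 * k ∣ n) := fun h => h3 ((dvd_mul_right 3 k).trans h)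
    rw [if_neg h3, if_neg h3k, map_zero]

end Cube

section JTP
variable {R : Type*} [CommRing R] (a b : R)

def Tn (j : ℤ) : ℕ := (j * (j + 1)).toNat / 2

lemma Tn_cast (j : ℤ) : 2 * (Tn j : ℤ) = j * (j + 1) := by
  obtain ⟨c, hc⟩ := Int.even_mul_succ_self j
  have hnn : 0 ≤ j * (j + 1) := by
    rcases le_or_gt 0 j with h | h
    · exact mul_nonneg h (by omega)
    · have h1 : (0:ℤ) ≤ -j := by omega
      have h2 : (0:ℤ) ≤ -(j+1) := by omega
      nlinarith [mul_nonneg h1 h2]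
  unfold Tn
  omega

/-- product over exponents in `[x, y]` of `(1 - q^i)`, `q = a*b`. -/
def Pi' (x y : ℕ) : R := ∏ i ∈ Finset.range (y + 1 - x), (1 - (a*b) ^ (x + i))

lemma Pi'_empty (x y : ℕ) (h : y + 1 ≤ x) : Pi' a b x y = 1 := by
  unfold Pi'
  rw [show y + 1 - x = 0 by omega]
  simp

lemma Pi'_top (x y : ℕ) (h : x ≤ y + 1) : Pi' a b x (y+1) = Pi' a b x y * (1 - (a*b)^(y+1)) := by
  unfold Pi'
  rw [show y + 1 + 1 - x = (y + 1 - x) + 1 by omega, Finset.prod_range_succ,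
    show x + (y + 1 - x) = y + 1 by omega]

lemma Pi'_bot (x y : ℕ) (h : x ≤ y) : Pi' a b x y = (1 - (a*b)^x) * Pi' a b (x+1) y := by
  unfold Pi'
  rw [show y + 1 - x = (y - x) + 1 by omega, Finset.prod_range_succ']
  rw [show y + 1 - (x+1) = y - x by omega, add_zero, mul_comm]
  exact congrArg₂ (· * ·) rfl
    (Finset.prod_congr rfl fun i _ => by rw [show x + (i+1) = x + 1 + i by omega])

lemma Pi'_single (x : ℕ) : Pi' a b x x = 1 - (a*b)^x := by
  unfold Pi'
  rw [show x + 1 - x = 1 by omega, Finset.prod_range_one, add_zero]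

def Cc0 (N m : ℕ) : R := Pi' a b (N+m+1) (2*N) * Pi' a b (N-m+1) N

def Cc (N : ℕ) (j : ℤ) : R := if j.natAbs ≤ N then Cc0 a b N j.natAbs else 0

lemma Cc_neg (N : ℕ) (j : ℤ) : Cc a b N (-j) = Cc a b N j := by
  unfold Cc
  rw [Int.natAbs_neg]

lemma Cc_zero (N : ℕ) (j : ℤ) (h : N < j.natAbs) : Cc a b N j = 0 := by
  unfold Cc
  rw [if_neg (by omega)]

lemma natAbs_coe (k : ℕ) : ((k:ℤ)).natAbs = k := Int.natAbs_natCast k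

lemma Cc_rec_nonneg (N k : ℕ) (hk : k ≤ N + 1) :
    Cc a b (N+1) (k:ℤ) = (1 - (a*b)^(N+1)) *
      ((1 + (a*b)^(2*N+1)) * Cc a b N (k:ℤ)
        + (a*b)^(((N:ℤ) - k + 1).toNat) * Cc a b N ((k:ℤ)-1)
        + (a*b)^(((N:ℤ) + k + 1).toNat) * Cc a b N ((k:ℤ)+1)) := by
  have he1 : ((N:ℤ) - k + 1).toNat = N + 1 - k := by omega
  have he2 : ((N:ℤ) + k + 1).toNat = N + k + 1 := by omega
  have hCk : Cc a b (N+1) (k:ℤ) = Cc0 a b (N+1) k := by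
    unfold Cc; rw [natAbs_coe, if_pos hk]
  have hCup : Cc a b N ((k:ℤ)+1) = if k + 1 ≤ N then Cc0 a b N (k+1) else 0 := by
    unfold Cc
    rw [show (k:ℤ)+1 = ((k+1:ℕ):ℤ) by push_cast; ring, natAbs_coe]
  rw [he1, he2, hCk, hCup]
  rcases Nat.lt_or_ge k (N+1) with hkN | hkN1
  · -- k ≤ N
    have hCmid : Cc a b N (k:ℤ) = Cc0 a b N k := by
      unfold Cc; rw [natAbs_coe, if_pos (by omega)]
    rw [hCmid]
    rcases Nat.eq_zero_or_pos k with hk0 | hk1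
    · -- k = 0
      subst hk0
      have hCdn : Cc a b N (((0:ℕ):ℤ)-1) = if 1 ≤ N then Cc0 a b N 1 else 0 := by
        unfold Cc
        norm_num
      rw [hCdn]
      rcases Nat.eq_zero_or_pos N with hN0 | hN1
      · subst hN0
        norm_num [Cc0, Pi']
        ring
      · rw [if_pos (show 1 ≤ N from hN1)]
        unfold Cc0
        rw [show N+1+1 = N+2 by omega, show N+1-0+1 = N+2 by omega, show N+1-0 = N+1 by omega,
          show N-1+1 = N by omega, show N-0+1 = N+1 by omega, show N+0+1 = N+1 by omega,
          show 2*(N+1) = (2*N+1)+1 by omega]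
        rw [Pi'_empty a b (N+2) (N+1) (by omega),
          Pi'_top a b (N+2) (2*N+1) (by omega), Pi'_top a b (N+2) (2*N) (by omega)]
        rw [Pi'_bot a b (N+1) (2*N) (by omega), show N+1+1 = N+2 by omega]
        rw [Pi'_single a b N, Pi'_empty a b (N+1) N (by omega)]
        rw [show (2*N+1)+1 = N+N+2 by omega, show 2*N+1 = N+(N+1) by omega]
        simp only [pow_add, pow_succ, pow_one]
        ring
    · -- 1 ≤ k ≤ N
      have hCdn : Cc a b N ((k:ℤ)-1) = Cc0 a b N (k-1) := by
        unfold Cc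
        rw [show (k:ℤ)-1 = ((k-1:ℕ):ℤ) by omega, natAbs_coe, if_pos (by omega)]
      rw [hCdn]
      rcases Nat.lt_or_ge k N with hkN' | hkN''
      · -- 1 ≤ k ≤ N-1
        rw [if_pos (by omega)]
        unfold Cc0
        rw [show N+1+k+1 = N+k+2 by omega, show N+1-k+1 = N-k+2 by omega,
          show N-(k-1)+1 = N-k+2 by omega, show N+(k-1)+1 = N+k by omega,
          show N-(k+1)+1 = N-k by omega, show N+(k+1)+1 = N+k+2 by omega]
        rw [show 2*(N+1) = (2*N+1)+1 by omega, Pi'_top a b (N+k+2) (2*N+1) (by omega),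
          Pi'_top a b (N+k+2) (2*N) (by omega),
          Pi'_top a b (N-k+2) N (by omega)]
        rw [Pi'_bot a b (N+k) (2*N) (by omega), Pi'_bot a b (N-k) N (by omega)]
        rw [Pi'_bot a b (N+k+1) (2*N) (by omega), Pi'_bot a b (N-k+1) N (by omega)]
        rw [show N+k+1+1 = N+k+2 by omega, show N-k+1+1 = N-k+2 by omega]
        rw [show (2*N+1)+1 = (N-k)+(N+k)+2 by omega, show 2*N+1 = (N-k)+(N+k)+1 by omega,
          show N+1-k = (N-k)+1 by omega]
        simp only [pow_add, pow_succ, pow_one]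
        ring
      · -- k = N, 1 ≤ k
        have hkN2 : k = N := by omega
        subst hkN2
        rw [if_neg (by omega)]
        unfold Cc0
        rw [show k+1+k+1 = 2*k+2 by omega, show k+1-k+1 = 2 by omega,
          show k-k+1 = 1 by omega, show k-(k-1)+1 = 2 by omega, show k+(k-1)+1 = 2*k by omega,
          show 2*(k+1) = 2*k+2 by omega]
        rw [Pi'_single a b (2*k+2), Pi'_single a b (2*k)]
        rw [Pi'_top a b 2 k (by omega)]
        rw [Pi'_empty a b (k+k+1) (2*k) (by omega)]
        rw [Pi'_bot a b 1 k (by omega)]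
        rw [show k+1-k = 1 by omega]
        rw [show 2*k+2 = k+k+2 by omega, show 2*k+1 = k+k+1 by omega, show 2*k = k+k by omega]
        simp only [pow_add, pow_succ, pow_zero, pow_one, one_mul]
        ring
  · -- k = N+1
    have hke : k = N + 1 := by omega
    subst hke
    have hCdn : Cc a b N (((N+1:ℕ):ℤ)-1) = Cc0 a b N N := by
      unfold Cc
      rw [show ((N+1:ℕ):ℤ)-1 = ((N:ℕ):ℤ) by omega, natAbs_coe, if_pos le_rfl]
    rw [hCdn, if_neg (by omega)]
    have hCN1 : Cc a b N ((N+1:ℕ):ℤ) = 0 := by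
      unfold Cc
      rw [natAbs_coe, if_neg (by omega)]
    rw [hCN1]
    unfold Cc0
    rw [show N+1+(N+1)+1 = 2*N+3 by omega, show N+1-(N+1)+1 = 1 by omega,
      show N+N+1 = 2*N+1 by omega, show N-N+1 = 1 by omega,
      show 2*(N+1) = 2*N+2 by omega]
    rw [Pi'_empty a b (2*N+3) (2*N+2) (by omega), Pi'_empty a b (2*N+1) (2*N) (by omega)]
    rw [show N+1-(N+1) = 0 by omega]
    rw [Pi'_top a b 1 N (by omega)]
    simp only [pow_zero]
    ring

lemma Cc_rec (N : ℕ) (j : ℤ) (hj : j.natAbs ≤ N + 1) :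
    Cc a b (N+1) j = (1 - (a*b)^(N+1)) *
      ((1 + (a*b)^(2*N+1)) * Cc a b N j
        + (a*b)^(((N:ℤ) - j + 1).toNat) * Cc a b N (j-1)
        + (a*b)^(((N:ℤ) + j + 1).toNat) * Cc a b N (j+1)) := by
  rcases le_or_gt 0 j with h | h
  · have hk : j = ((j.toNat : ℕ) : ℤ) := by omega
    rw [hk]
    exact Cc_rec_nonneg a b N j.toNat (by omega)
  · have hk : -j = ((((-j).toNat : ℕ)) : ℤ) := by omega
    have h' := Cc_rec_nonneg a b N (-j).toNat (by omega)
    rw [← hk] at h'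
    have e1 : -j - 1 = -(j+1) := by ring
    have e2 : -j + 1 = -(j-1) := by ring
    have e3 : (N:ℤ) - -j + 1 = (N:ℤ) + j + 1 := by ring
    have e4 : (N:ℤ) + -j + 1 = (N:ℤ) - j + 1 := by ring
    rw [e1, e2, e3, e4, Cc_neg, Cc_neg, Cc_neg, Cc_neg] at h'
    rw [h']
    ring

lemma K2 (N : ℕ) (i : ℤ) (hi : i ≤ (N:ℤ)) :
    a ^ Tn (i+1) * b ^ Tn (-(i+1)) * (a*b) ^ (((N:ℤ) - i).toNat)
      = (a * (a*b)^N) * (a ^ Tn i * b ^ Tn (-i)) := by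
  have hNi : ((((N:ℤ) - i).toNat : ℕ) : ℤ) = (N:ℤ) - i := Int.toNat_of_nonneg (by omega)
  have c1 := Tn_cast (i+1)
  have c2 := Tn_cast i
  have c3 := Tn_cast (-(i+1))
  have c4 := Tn_cast (-i)
  have h1 : Tn (i+1) + ((N:ℤ) - i).toNat = 1 + N + Tn i := by
    have pr : ((i:ℤ)+1) * ((i+1)+1) = i*(i+1) + 2*i+2 := by ring
    have : ((Tn (i+1) + ((N:ℤ) - i).toNat : ℕ) : ℤ) = ((1 + N + Tn i : ℕ) : ℤ) := by
      push_cast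
      rw [hNi]
      linarith
    exact Nat.cast_injective this
  have h2 : Tn (-(i+1)) + ((N:ℤ) - i).toNat = N + Tn (-i) := by
    have pr : (-((i:ℤ)+1)) * ((-(i+1))+1) = i*(i+1) := by ring
    have pr2 : (-(i:ℤ)) * ((-i)+1) = i*(i+1) - 2*i := by ring
    have : ((Tn (-(i+1)) + ((N:ℤ) - i).toNat : ℕ) : ℤ) = ((N + Tn (-i) : ℕ) : ℤ) := by
      push_cast
      rw [hNi]
      linarith
    exact Nat.cast_injective this
  calc a ^ Tn (i+1) * b ^ Tn (-(i+1)) * (a*b) ^ (((N:ℤ) - i).toNat)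
      = a ^ (Tn (i+1) + ((N:ℤ) - i).toNat) * b ^ (Tn (-(i+1)) + ((N:ℤ) - i).toNat) := by
        rw [mul_pow, pow_add, pow_add]; ring
    _ = a ^ (1 + N + Tn i) * b ^ (N + Tn (-i)) := by rw [h1, h2]
    _ = (a * (a*b)^N) * (a ^ Tn i * b ^ Tn (-i)) := by
        rw [pow_add, pow_add, pow_add, pow_one, mul_pow]; ring

lemma K3 (N : ℕ) (i : ℤ) (hi : -(N:ℤ) ≤ i) :
    a ^ Tn (i-1) * b ^ Tn (-(i-1)) * (a*b) ^ (((N:ℤ) + i).toNat)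
      = (b * (a*b)^N) * (a ^ Tn i * b ^ Tn (-i)) := by
  have hNi : ((((N:ℤ) + i).toNat : ℕ) : ℤ) = (N:ℤ) + i := Int.toNat_of_nonneg (by omega)
  have c1 := Tn_cast (i-1)
  have c2 := Tn_cast i
  have c3 := Tn_cast (-(i-1))
  have c4 := Tn_cast (-i)
  have h1 : Tn (i-1) + ((N:ℤ) + i).toNat = N + Tn i := by
    have pr : ((i:ℤ)-1) * ((i-1)+1) = i*(i+1) - 2*i := by ring
    have : ((Tn (i-1) + ((N:ℤ) + i).toNat : ℕ) : ℤ) = ((N + Tn i : ℕ) : ℤ) := by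
      push_cast
      rw [hNi]
      linarith
    exact Nat.cast_injective this
  have h2 : Tn (-(i-1)) + ((N:ℤ) + i).toNat = 1 + N + Tn (-i) := by
    have pr : (-((i:ℤ)-1)) * ((-(i-1))+1) = i*(i+1) - 4*i + 2 := by ring
    have pr2 : (-(i:ℤ)) * ((-i)+1) = i*(i+1) - 2*i := by ring
    have : ((Tn (-(i-1)) + ((N:ℤ) + i).toNat : ℕ) : ℤ) = ((1 + N + Tn (-i) : ℕ) : ℤ) := by
      push_cast
      rw [hNi]
      linarith
    exact Nat.cast_injective this
  calc a ^ Tn (i-1) * b ^ Tn (-(i-1)) * (a*b) ^ (((N:ℤ) + i).toNat)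
      = a ^ (Tn (i-1) + ((N:ℤ) + i).toNat) * b ^ (Tn (-(i-1)) + ((N:ℤ) + i).toNat) := by
        rw [mul_pow, pow_add, pow_add]; ring
    _ = a ^ (N + Tn i) * b ^ (1 + N + Tn (-i)) := by rw [h1, h2]
    _ = (b * (a*b)^N) * (a ^ Tn i * b ^ Tn (-i)) := by
        rw [pow_add, pow_add, pow_add, pow_one, mul_pow]; ring

theorem jtp (N : ℕ) :
    ∏ n ∈ Finset.range N, ((1 - (a*b)^(n+1)) * ((1 + a*(a*b)^n) * (1 + b*(a*b)^n)))
      = ∑ j ∈ Finset.Icc (-(N:ℤ)) (N:ℤ), a^(Tn j) * b^(Tn (-j)) * Cc a b N j := by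
  induction N with
  | zero =>
      norm_num [Tn, Cc, Cc0, Pi']
  | succ N ih =>
      rw [Finset.prod_range_succ, ih]
      have hIcc : Finset.Icc (-((N+1:ℕ):ℤ)) ((N+1:ℕ):ℤ) = Finset.Icc (-(N:ℤ)-1) ((N:ℤ)+1) := by
        congr 1 <;> push_cast <;> ring
      rw [hIcc]
      have hstep : ∀ j ∈ Finset.Icc (-(N:ℤ)-1) ((N:ℤ)+1),
          a^(Tn j) * b^(Tn (-j)) * Cc a b (N+1) j
            = (1 - (a*b)^(N+1)) * ((1 + (a*b)^(2*N+1)) * (a^(Tn j) * b^(Tn (-j)) * Cc a b N j))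
              + ((1 - (a*b)^(N+1)) * ((a^(Tn j) * b^(Tn (-j)) * (a*b)^(((N:ℤ) - j + 1).toNat)) * Cc a b N (j-1))
              + (1 - (a*b)^(N+1)) * ((a^(Tn j) * b^(Tn (-j)) * (a*b)^(((N:ℤ) + j + 1).toNat)) * Cc a b N (j+1))) := by
        intro j hj
        rw [Finset.mem_Icc] at hj
        rw [Cc_rec a b N j (by omega)]
        ring
      rw [Finset.sum_congr rfl hstep, Finset.sum_add_distrib, Finset.sum_add_distrib]
      -- S1
      have hS1 : ∑ j ∈ Finset.Icc (-(N:ℤ)-1) ((N:ℤ)+1),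
          (1 - (a*b)^(N+1)) * ((1 + (a*b)^(2*N+1)) * (a^(Tn j) * b^(Tn (-j)) * Cc a b N j))
          = (1 - (a*b)^(N+1)) * ((1 + (a*b)^(2*N+1)) *
              ∑ j ∈ Finset.Icc (-(N:ℤ)) (N:ℤ), a^(Tn j) * b^(Tn (-j)) * Cc a b N j) := by
        rw [Finset.mul_sum, Finset.mul_sum]
        refine (Finset.sum_subset ?_ ?_).symm
        · intro x hx
          rw [Finset.mem_Icc] at hx ⊢
          omega
        · intro x hx hnx
          rw [Finset.mem_Icc] at hx hnx
          rw [Cc_zero a b N x (by omega)]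
          ring
      -- S2
      have hS2 : ∑ j ∈ Finset.Icc (-(N:ℤ)-1) ((N:ℤ)+1),
          (1 - (a*b)^(N+1)) * ((a^(Tn j) * b^(Tn (-j)) * (a*b)^(((N:ℤ) - j + 1).toNat)) * Cc a b N (j-1))
          = (1 - (a*b)^(N+1)) * ((a * (a*b)^N) *
              ∑ j ∈ Finset.Icc (-(N:ℤ)) (N:ℤ), a^(Tn j) * b^(Tn (-j)) * Cc a b N j) := by
        rw [Finset.mul_sum, Finset.mul_sum]
        have hmap : ∑ i ∈ Finset.Icc (-(N:ℤ)) (N:ℤ),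
            (1 - (a*b)^(N+1)) * ((a * (a*b)^N) * (a^(Tn i) * b^(Tn (-i)) * Cc a b N i))
            = ∑ j ∈ Finset.Icc (-(N:ℤ)+1) ((N:ℤ)+1),
            (1 - (a*b)^(N+1)) * ((a^(Tn j) * b^(Tn (-j)) * (a*b)^(((N:ℤ) - j + 1).toNat)) * Cc a b N (j-1)) := by
          rw [← Finset.map_add_right_Icc (-(N:ℤ)) (N:ℤ) 1, Finset.sum_map]
          refine Finset.sum_congr rfl fun i hi => ?_
          rw [Finset.mem_Icc] at hi
          have hemb : (addRightEmbedding (1:ℤ)) i = i + 1 := rfl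
          rw [hemb, show i + 1 - 1 = i by ring, show (N:ℤ) - (i+1) + 1 = (N:ℤ) - i by ring,
            K2 a b N i (by omega)]
          ring
        rw [hmap]
        refine (Finset.sum_subset ?_ ?_).symm
        · intro x hx
          rw [Finset.mem_Icc] at hx ⊢
          omega
        · intro x hx hnx
          rw [Finset.mem_Icc] at hx hnx
          rw [Cc_zero a b N (x-1) (by omega)]
          ring
      -- S3
      have hS3 : ∑ j ∈ Finset.Icc (-(N:ℤ)-1) ((N:ℤ)+1),
          (1 - (a*b)^(N+1)) * ((a^(Tn j) * b^(Tn (-j)) * (a*b)^(((N:ℤ) + j + 1).toNat)) * Cc a b N (j+1))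
          = (1 - (a*b)^(N+1)) * ((b * (a*b)^N) *
              ∑ j ∈ Finset.Icc (-(N:ℤ)) (N:ℤ), a^(Tn j) * b^(Tn (-j)) * Cc a b N j) := by
        rw [Finset.mul_sum, Finset.mul_sum]
        have hmap : ∑ i ∈ Finset.Icc (-(N:ℤ)) (N:ℤ),
            (1 - (a*b)^(N+1)) * ((b * (a*b)^N) * (a^(Tn i) * b^(Tn (-i)) * Cc a b N i))
            = ∑ j ∈ Finset.Icc (-(N:ℤ)-1) ((N:ℤ)-1),
            (1 - (a*b)^(N+1)) * ((a^(Tn j) * b^(Tn (-j)) * (a*b)^(((N:ℤ) + j + 1).toNat)) * Cc a b N (j+1)) := by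
          rw [show -(N:ℤ)-1 = -(N:ℤ) + -1 by ring, show (N:ℤ)-1 = (N:ℤ) + -1 by ring,
            ← Finset.map_add_right_Icc (-(N:ℤ)) (N:ℤ) (-1), Finset.sum_map]
          refine Finset.sum_congr rfl fun i hi => ?_
          rw [Finset.mem_Icc] at hi
          have hemb : (addRightEmbedding (-1:ℤ)) i = i + -1 := rfl
          rw [hemb, show i + -1 + 1 = i by ring, show i + -1 = i - 1 by ring,
            show (N:ℤ) + (i - 1) + 1 = (N:ℤ) + i by ring,
            K3 a b N i (by omega)]
          ring
        rw [hmap]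
        refine (Finset.sum_subset ?_ ?_).symm
        · intro x hx
          rw [Finset.mem_Icc] at hx ⊢
          omega
        · intro x hx hnx
          rw [Finset.mem_Icc] at hx hnx
          rw [Cc_zero a b N (x+1) (by omega)]
          ring
      rw [hS1, hS2, hS3]
      rw [show 2*N+1 = N+(N+1) by omega]
      simp only [pow_add, pow_succ, pow_one]
      ring

end JTP

section Limits
open Finset

lemma Tn_add_Tn_neg (j : ℤ) : Tn j + Tn (-j) = j.natAbs * j.natAbs := by
  have c1 := Tn_cast j
  have c2 := Tn_cast (-j)
  have pr : (-j) * (-j + 1) = j*(j+1) - 2*j := by ring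
  have habs : ((j.natAbs * j.natAbs : ℕ) : ℤ) = j * j := by
    push_cast [Int.natAbs_mul_self]
    exact abs_mul_abs_self j
  have : ((Tn j + Tn (-j) : ℕ) : ℤ) = ((j.natAbs * j.natAbs : ℕ) : ℤ) := by
    rw [habs]
    push_cast
    have pr2 : j*(j+1) = j*j + j := by ring
    linarith
  exact Nat.cast_injective this

lemma neg_one_pow_mul_self {S : Type*} [Monoid S] [HasDistribNeg S] (m : ℕ) :
    ((-1:S))^(m*m) = (-1)^m := by
  rcases Nat.even_or_odd m with h | h
  · rw [(h.mul_right m).neg_one_pow, h.neg_one_pow]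
  · rw [(h.mul h).neg_one_pow, h.neg_one_pow]

lemma hab_pow (u v : ℕ) : ((-(X:PowerSeries ℤ)^u) * (-(X^v))) = X^(u+v) := by
  rw [neg_mul_neg, ← pow_add]

lemma Pi'_X (u v x y : ℕ) :
    Pi' (-(X:PowerSeries ℤ)^u) (-(X^v)) x y
      = ∏ i ∈ range (y+1-x), (1 - (X:PowerSeries ℤ)^((u+v)*(x+i))) := by
  unfold Pi'
  refine Finset.prod_congr rfl fun i _ => ?_
  rw [hab_pow, ← pow_mul]

lemma coeff_Cc (u v N : ℕ) (hu : 1 ≤ u) (j : ℤ) (e : ℕ) (hm : j.natAbs ≤ N)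
    (he : e < (u+v) * (N - j.natAbs + 1)) :
    coeff e (Cc (-(X:PowerSeries ℤ)^u) (-(X^v)) N j) = if e = 0 then 1 else 0 := by
  rw [Cc, if_pos hm, Cc0, Pi'_X, Pi'_X]
  have h1 : coeff e ((∏ i ∈ range (2*N+1-(N+j.natAbs+1)), (1 - (X:PowerSeries ℤ)^((u+v)*(N+j.natAbs+1+i)))) *
      ∏ i ∈ range (N+1-(N-j.natAbs+1)), (1 - (X:PowerSeries ℤ)^((u+v)*(N-j.natAbs+1+i)))) =
      coeff e (∏ i ∈ range (2*N+1-(N+j.natAbs+1)), (1 - (X:PowerSeries ℤ)^((u+v)*(N+j.natAbs+1+i)))) := by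
    apply coeff_mul_prod_one_sub
    intro i _
    calc e < (u+v) * (N - j.natAbs + 1) := he
      _ ≤ (u+v) * (N - j.natAbs + 1 + i) := Nat.mul_le_mul_left _ (by omega)
  rw [h1]
  rcases Nat.eq_zero_or_pos e with he0 | he0
  · subst he0
    rw [if_pos rfl]
    have := coeff_mul_prod_one_sub (1 : PowerSeries ℤ) 0
      (range (2*N+1-(N+j.natAbs+1))) (fun i => (u+v)*(N+j.natAbs+1+i))
      (fun i _ => Nat.mul_pos (by omega) (by omega))
    rw [one_mul] at this
    rw [this, coeff_zero_eq_constantCoeff, map_one]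
  · rw [if_neg (by omega)]
    apply coeff_prod_one_sub _ _ _ _ he0
    intro i _
    calc e < (u+v) * (N - j.natAbs + 1) := he
      _ ≤ (u+v) * (N + j.natAbs + 1 + i) := Nat.mul_le_mul_left _ (by omega)

noncomputable def theta (u v : ℕ) : PowerSeries ℤ :=
  PowerSeries.mk fun M => ∑ j ∈ Finset.Icc (-(M:ℤ)-1) ((M:ℤ)+1),
    if u * Tn j + v * Tn (-j) = M then (-1:ℤ)^(j.natAbs) else 0

theorem prod_eq_theta (u v : ℕ) (hu : 1 ≤ u) (hv : 1 ≤ v) :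
    f (u+v) * pprod (fun m => (u+v)*m + u) * pprod (fun m => (u+v)*m + v) = theta u v := by
  ext M
  set w := u + v with hw
  have hw2 : 2 ≤ w := by omega
  -- replace by partial products
  have h1 : coeff M (f w * pprod (fun m => w*m + u) * pprod (fun m => w*m + v))
      = coeff M (((∏ m ∈ range (M+1), (1 - (X:PowerSeries ℤ)^(w*(m+1)))) *
          (∏ m ∈ range (M+1), (1 - (X:PowerSeries ℤ)^(w*m+u)))) *
          (∏ m ∈ range (M+1), (1 - (X:PowerSeries ℤ)^(w*m+v)))) := by
    refine coeff_mul_congr_s5 _ _ _ _ M (fun i hi => ?_) (fun i hi => ?_)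
    · refine coeff_mul_congr_s5 _ _ _ _ i (fun l hl => ?_) (fun l hl => ?_)
      · exact f_spec w (by omega) l (M+1) (by omega)
      · exact pprod_spec _ (fun m => by nlinarith) l (M+1) (by omega)
    · exact pprod_spec _ (fun m => by nlinarith) i (M+1) (by omega)
  rw [h1]
  have h2 : ((∏ m ∈ range (M+1), (1 - (X:PowerSeries ℤ)^(w*(m+1)))) *
          (∏ m ∈ range (M+1), (1 - (X:PowerSeries ℤ)^(w*m+u)))) *
          (∏ m ∈ range (M+1), (1 - (X:PowerSeries ℤ)^(w*m+v)))
      = ∏ n ∈ range (M+1), ((1 - ((-(X:PowerSeries ℤ)^u)*(-(X:PowerSeries ℤ)^v))^(n+1)) *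
          ((1 + (-(X:PowerSeries ℤ)^u)*((-(X:PowerSeries ℤ)^u)*(-(X:PowerSeries ℤ)^v))^n) *
           (1 + (-(X:PowerSeries ℤ)^v)*((-(X:PowerSeries ℤ)^u)*(-(X:PowerSeries ℤ)^v))^n))) := by
    rw [Finset.prod_mul_distrib, Finset.prod_mul_distrib, mul_assoc]
    refine congrArg₂ (· * ·) ?_ (congrArg₂ (· * ·) ?_ ?_)
    · refine Finset.prod_congr rfl fun m _ => ?_
      rw [hab_pow, ← pow_mul]
    · refine Finset.prod_congr rfl fun m _ => ?_
      rw [hab_pow, ← pow_mul, show w*m+u = u + w*m by ring, pow_add]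
      ring
    · refine Finset.prod_congr rfl fun m _ => ?_
      rw [hab_pow, ← pow_mul, show w*m+v = v + w*m by ring, pow_add]
      ring
  rw [h2, jtp, map_sum, theta, coeff_mk]
  have e1 : (-((M+1:ℕ):ℤ)) = -(M:ℤ)-1 := by push_cast; ring
  have e2 : ((M+1:ℕ):ℤ) = (M:ℤ)+1 := by push_cast; ring
  rw [e1, e2]
  refine Finset.sum_congr rfl fun j hj => ?_
  rw [Finset.mem_Icc] at hj
  have hmN : j.natAbs ≤ M + 1 := by omega
  -- monomial form
  have hterm : (-(X:PowerSeries ℤ)^u)^(Tn j) * (-(X:PowerSeries ℤ)^v)^(Tn (-j)) *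
      Cc (-(X:PowerSeries ℤ)^u) (-(X:PowerSeries ℤ)^v) (M+1) j
      = (C ((-1:ℤ)^(j.natAbs))) * ((X:PowerSeries ℤ)^(u * Tn j + v * Tn (-j)) *
          Cc (-(X:PowerSeries ℤ)^u) (-(X:PowerSeries ℤ)^v) (M+1) j) := by
    rw [neg_pow ((X:PowerSeries ℤ)^u), neg_pow ((X:PowerSeries ℤ)^v)]
    have hsgn : ((-1:PowerSeries ℤ))^(Tn j) * ((-1:PowerSeries ℤ))^(Tn (-j)) = C ((-1:ℤ)^(j.natAbs)) := by
      rw [← pow_add, Tn_add_Tn_neg, neg_one_pow_mul_self, map_pow, map_neg, map_one]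
    rw [← pow_mul, ← pow_mul, show u * Tn j + v * Tn (-j) = u * Tn j + v * Tn (-j) from rfl]
    calc (-1:PowerSeries ℤ)^(Tn j) * (X:PowerSeries ℤ)^(u * Tn j) *
          ((-1:PowerSeries ℤ)^(Tn (-j)) * (X:PowerSeries ℤ)^(v * Tn (-j))) *
          Cc (-(X:PowerSeries ℤ)^u) (-(X:PowerSeries ℤ)^v) (M+1) j
        = ((-1:PowerSeries ℤ)^(Tn j) * ((-1:PowerSeries ℤ))^(Tn (-j))) *
          ((X:PowerSeries ℤ)^(u * Tn j) * (X:PowerSeries ℤ)^(v * Tn (-j)) *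
          Cc (-(X:PowerSeries ℤ)^u) (-(X:PowerSeries ℤ)^v) (M+1) j) := by ring
      _ = _ := by rw [hsgn, ← pow_add]
  rw [hterm, PowerSeries.coeff_C_mul]
  set E := u * Tn j + v * Tn (-j) with hE
  rcases le_or_gt E M with hEM | hEM
  · rw [PowerSeries.coeff_X_pow_mul']
    rw [if_pos hEM]
    have hsq : j.natAbs * j.natAbs ≤ E := by
      rw [hE, ← Tn_add_Tn_neg]
      have := Nat.mul_le_mul_right (Tn j) hu
      have := Nat.mul_le_mul_right (Tn (-j)) hv
      omega
    have hkey : M - E < w * (M + 1 - j.natAbs + 1) := by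
      have h2m : 2 * j.natAbs ≤ j.natAbs * j.natAbs + 1 := by nlinarith
      have hle : 2 * (M + 1 - j.natAbs + 1) ≤ w * (M + 1 - j.natAbs + 1) :=
        Nat.mul_le_mul_right _ hw2
      omega
    rw [coeff_Cc u v (M+1) hu j (M-E) hmN hkey]
    by_cases hEeq : E = M
    · rw [if_pos (by omega), if_pos hEeq]
      exact mul_one _
    · rw [if_neg (by omega), if_neg hEeq, mul_zero]
  · rw [PowerSeries.coeff_X_pow_mul', if_neg (by omega), if_neg (by omega), mul_zero]

end Limits

section Splits
open Finset

lemma prodsplit2 (s : ℕ) :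
    ∏ m ∈ range (2*s), (1 - (X:PowerSeries ℤ)^(m+1))
      = (∏ m ∈ range s, (1 - (X:PowerSeries ℤ)^(2*(m+1)))) *
        ∏ m ∈ range s, (1 - (X:PowerSeries ℤ)^(2*m+1)) := by
  induction s with
  | zero => simp
  | succ s ih =>
      rw [show 2*(s+1) = (2*s)+1+1 by omega, prod_range_succ, prod_range_succ, ih,
        prod_range_succ, prod_range_succ]
      rw [show (2*s)+1+1 = 2*(s+1) by omega]
      ring

lemma prodsplit3 (s : ℕ) :
    ∏ m ∈ range (3*s), (1 - (X:PowerSeries ℤ)^(6*(m+1)))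
      = ((∏ m ∈ range s, (1 - (X:PowerSeries ℤ)^(18*(m+1)))) *
        ∏ m ∈ range s, (1 - (X:PowerSeries ℤ)^(18*m+12))) *
        ∏ m ∈ range s, (1 - (X:PowerSeries ℤ)^(18*m+6)) := by
  induction s with
  | zero => simp
  | succ s ih =>
      rw [show 3*(s+1) = (3*s)+1+1+1 by omega, prod_range_succ, prod_range_succ,
        prod_range_succ, ih, prod_range_succ, prod_range_succ, prod_range_succ]
      rw [show 6*((3*s)+1+1+1) = 18*(s+1) by omega, show 6*((3*s)+1+1) = 18*s+12 by omega,
        show 6*((3*s)+1) = 18*s+6 by omega]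
      ring

lemma split2 : f 1 = f 2 * pprod (fun m => 2*m+1) := by
  ext n
  rw [f_spec 1 le_rfl n (2*(n+1)) (by omega)]
  simp only [one_mul]
  rw [prodsplit2 (n+1)]
  refine (coeff_mul_congr_s5 _ _ _ _ n (fun i hi => ?_) (fun i hi => ?_)).symm
  · exact f_spec 2 (by omega) i (n+1) (by omega)
  · exact pprod_spec _ (fun m => by omega) i (n+1) (by omega)

lemma split6 : f 6 = f 18 * pprod (fun m => 18*m+12) * pprod (fun m => 18*m+6) := by
  ext n
  rw [f_spec 6 (by omega) n (3*(n+1)) (by omega)]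
  rw [prodsplit3 (n+1)]
  refine (coeff_mul_congr_s5 _ _ _ _ n (fun i hi => ?_) (fun i hi => ?_)).symm
  · refine coeff_mul_congr_s5 _ _ _ _ i (fun l hl => ?_) (fun l hl => ?_)
    · exact f_spec 18 (by omega) l (n+1) (by omega)
    · exact pprod_spec _ (fun m => by omega) l (n+1) (by omega)
  · exact pprod_spec _ (fun m => by omega) i (n+1) (by omega)

theorem gauss_s5 : (f 1)^2 = theta 1 1 * f 2 := by
  have h := prod_eq_theta 1 1 le_rfl le_rfl
  have e : (1+1 : ℕ) = 2 := rfl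
  simp only [e, one_mul] at h
  rw [split2]
  calc (f 2 * pprod (fun m => 2*m+1))^2
      = (f 2 * pprod (fun m => 2*m+1) * pprod (fun m => 2*m+1)) * f 2 := by ring
    _ = theta 1 1 * f 2 := by rw [h]

theorem pent6 : f 6 = theta 12 6 := by
  have h := prod_eq_theta 12 6 (by omega) (by omega)
  have e : (12+6 : ℕ) = 18 := rfl
  simp only [e] at h
  rw [split6, h]

end Splits

section Vanish
open Finset

lemma three_dvd_card {α : Type*} [DecidableEq α] :
    ∀ (n : ℕ) (s : Finset α) (σ : α → α), s.card = n →
    (∀ x ∈ s, σ x ∈ s) → (∀ x ∈ s, σ (σ (σ x)) = x) → (∀ x ∈ s, σ x ≠ x) → 3 ∣ s.card := by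
  intro n
  induction n using Nat.strong_induction_on with
  | _ n ih =>
    intro s σ hcard h1 h2 h3
    rcases Finset.eq_empty_or_nonempty s with rfl | ⟨x, hx⟩
    · simp
    · have hinj : ∀ y ∈ s, ∀ z ∈ s, σ y = σ z → y = z := by
        intro y hy z hz h
        have h' := congrArg σ (congrArg σ h)
        rwa [h2 y hy, h2 z hz] at h'
      have hσx : σ x ∈ s := h1 x hx
      have hσσx : σ (σ x) ∈ s := h1 _ hσx
      have d1 : σ x ≠ x := h3 x hx
      have d2 : σ (σ x) ≠ σ x := h3 _ hσx
      have d3 : σ (σ x) ≠ x := by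
        intro h
        have h' : σ (σ (σ x)) = σ x := congrArg σ h
        rw [h2 x hx] at h'
        exact d1 (h'.symm)
      set T : Finset α := {x, σ x, σ (σ x)} with hT
      have hsub : T ⊆ s := by
        intro y hy
        rw [hT] at hy
        simp only [Finset.mem_insert, Finset.mem_singleton] at hy
        rcases hy with rfl | rfl | rfl <;> assumption
      have hcard3 : T.card = 3 := by
        rw [hT, Finset.card_insert_of_notMem (by simp only [Finset.mem_insert, Finset.mem_singleton]; push_neg; exact ⟨fun h => d1 h.symm, fun h => d3 h.symm⟩),
          Finset.card_insert_of_notMem (by simp only [Finset.mem_singleton]; exact fun h => d2 h.symm), Finset.card_singleton]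
      set s' := s \ T with hs'
      have hc' : s'.card = s.card - 3 := by rw [hs', Finset.card_sdiff_of_subset hsub, hcard3]
      have hTle : 3 ≤ s.card := hcard3 ▸ Finset.card_le_card hsub
      have hmem' : ∀ y, y ∈ s' ↔ (y ∈ s ∧ y ≠ x ∧ y ≠ σ x ∧ y ≠ σ (σ x)) := by
        intro y
        rw [hs', Finset.mem_sdiff, hT]
        simp only [Finset.mem_insert, Finset.mem_singleton]
        tauto
      have h1' : ∀ y ∈ s', σ y ∈ s' := by
        intro y hy
        rw [hmem'] at hy
        obtain ⟨hys, hy1, hy2, hy3⟩ := hy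
        rw [hmem']
        refine ⟨h1 y hys, ?_, ?_, ?_⟩
        · intro h
          have hx' : x = σ (σ (σ x)) := (h2 x hx).symm
          rw [hx'] at h
          exact hy3 (hinj y hys _ hσσx h)
        · intro h
          exact hy1 (hinj y hys x hx h)
        · intro h
          exact hy2 (hinj y hys _ hσx h)
      have h2' : ∀ y ∈ s', σ (σ (σ y)) = y := fun y hy => h2 y ((hmem' y).mp hy).1
      have h3' : ∀ y ∈ s', σ y ≠ y := fun y hy => h3 y ((hmem' y).mp hy).1
      have ihx := ih s'.card (by omega) s' σ rfl h1' h2' h3'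
      omega

lemma even_add_of_sq (x y : ℤ) (T : ℤ) (h : x^2 + 3*y^2 = T) (hT : Even T) : Even (x + y) := by
  obtain ⟨u, hu⟩ := hT
  rcases Int.even_or_odd x with ⟨c,hc⟩ | ⟨c,hc⟩ <;> rcases Int.even_or_odd y with ⟨e,he⟩ | ⟨e,he⟩
  · exact ⟨c + e, by omega⟩
  · exfalso
    have hT2 : T = 2*(2*(c*c)+6*(e*e)+6*e+1)+1 := by rw [← h, hc, he]; ring
    omega
  · exfalso
    have hT2 : T = 2*(2*(c*c)+2*c+6*(e*e))+1 := by rw [← h, hc, he]; ring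
    omega
  · exact ⟨c + e + 1, by omega⟩

lemma four_dvd_of_sq (x y : ℤ) (t : ℕ) (h : x^2 + 3*y^2 = (t:ℤ)) (hev : Even t) : 4 ∣ t := by
  obtain ⟨u, hu⟩ := hev
  rcases Int.even_or_odd x with ⟨c,hc⟩ | ⟨c,hc⟩ <;> rcases Int.even_or_odd y with ⟨e,he⟩ | ⟨e,he⟩
  · have hT2 : (t:ℤ) = 4*(c*c+3*(e*e)) := by rw [← h, hc, he]; ring
    omega
  · exfalso
    have hT2 : (t:ℤ) = 2*(2*(c*c)+6*(e*e)+6*e+1)+1 := by rw [← h, hc, he]; ring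
    omega
  · exfalso
    have hT2 : (t:ℤ) = 2*(2*(c*c)+2*c+6*(e*e))+1 := by rw [← h, hc, he]; ring
    omega
  · have hT2 : (t:ℤ) = 4*(c*c+c+3*(e*e)+3*e+1) := by rw [← h, hc, he]; ring
    omega

lemma abs_le_B (z : ℤ) (t : ℕ) (h : z^2 ≤ (t:ℤ)) : -((t:ℤ)+1) ≤ z ∧ z ≤ (t:ℤ)+1 := by
  constructor
  · have h1 : -2*z - 1 ≤ (t:ℤ) := by nlinarith [sq_nonneg (z+1)]
    omega
  · have h1 : 2*z - 1 ≤ (t:ℤ) := by nlinarith [sq_nonneg (z-1)]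
    omega

noncomputable def phi3 : PowerSeries ℤ :=
  PowerSeries.mk fun r => if 3 ∣ r then PowerSeries.coeff (r/3) (theta 1 1) else 0

lemma theta11_coeff (i : ℕ) (B : ℤ) (hB : (i:ℤ) + 1 ≤ B) :
    coeff i (theta 1 1)
      = ∑ x ∈ Icc (-B) B, if x.natAbs * x.natAbs = i then (-1:ℤ)^(x.natAbs) else 0 := by
  rw [theta, coeff_mk]
  have hcond : ∀ x : ℤ, (1 * Tn x + 1 * Tn (-x) = i) = (x.natAbs * x.natAbs = i) := by
    intro x
    rw [one_mul, one_mul, Tn_add_Tn_neg]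
  simp only [hcond]
  refine Finset.sum_subset ?_ ?_
  · intro x hx
    rw [mem_Icc] at hx ⊢
    omega
  · intro x hx hnx
    rw [mem_Icc] at hx hnx
    rw [if_neg]
    intro hcon
    have h2 : i + 2 ≤ x.natAbs := by omega
    nlinarith [hcon, h2]

lemma phi3_coeff (r : ℕ) (B : ℤ) (hB : (r:ℤ) + 1 ≤ B) :
    coeff r phi3
      = ∑ y ∈ Icc (-B) B, if 3 * (y.natAbs * y.natAbs) = r then (-1:ℤ)^(y.natAbs) else 0 := by
  rw [phi3, coeff_mk]
  by_cases h3 : 3 ∣ r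
  · have hr3 : r / 3 ≤ r := Nat.div_le_self r 3
    rw [if_pos h3, theta11_coeff (r/3) B (by omega)]
    refine Finset.sum_congr rfl fun y hy => ?_
    refine if_congr ?_ rfl rfl
    omega
  · rw [if_neg h3]
    refine (Finset.sum_eq_zero fun y hy => ?_).symm
    rw [if_neg]
    intro hcon
    exact h3 ⟨_, hcon.symm⟩

lemma V_int (t : ℕ) (ht : 0 < t) (hev : Even t) :
    (3:ℤ) ∣ coeff t (theta 1 1 * phi3) := by
  set B : ℤ := (t:ℤ) + 1 with hB
  have hstep1 : coeff t (theta 1 1 * phi3)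
      = ∑ x ∈ Icc (-B) B, ∑ y ∈ Icc (-B) B,
          (if x.natAbs*x.natAbs + 3*(y.natAbs*y.natAbs) = t
            then ((-1:ℤ)^(x.natAbs) * (-1)^(y.natAbs)) else 0) := by
    rw [PowerSeries.coeff_mul]
    have hterm : ∀ p ∈ antidiagonal t, coeff p.1 (theta 1 1) * coeff p.2 phi3
        = ∑ x ∈ Icc (-B) B, ∑ y ∈ Icc (-B) B,
            (if (x.natAbs*x.natAbs = p.1 ∧ 3*(y.natAbs*y.natAbs) = p.2)
              then ((-1:ℤ)^x.natAbs * (-1)^y.natAbs) else 0) := by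
      intro p hp
      rw [Finset.HasAntidiagonal.mem_antidiagonal] at hp
      rw [theta11_coeff p.1 B (by omega), phi3_coeff p.2 B (by omega), Finset.sum_mul_sum]
      refine Finset.sum_congr rfl fun x _ => Finset.sum_congr rfl fun y _ => ?_
      by_cases h1 : x.natAbs*x.natAbs = p.1 <;> by_cases h2 : 3*(y.natAbs*y.natAbs) = p.2 <;>
        simp [h1, h2]
    rw [Finset.sum_congr rfl hterm, Finset.sum_comm]
    refine Finset.sum_congr rfl fun x _ => ?_
    rw [Finset.sum_comm]
    refine Finset.sum_congr rfl fun y _ => ?_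
    by_cases hc : x.natAbs*x.natAbs + 3*(y.natAbs*y.natAbs) = t
    · rw [if_pos hc]
      rw [Finset.sum_eq_single_of_mem ((x.natAbs*x.natAbs), 3*(y.natAbs*y.natAbs))
        (by rw [Finset.HasAntidiagonal.mem_antidiagonal]; exact hc)]
      · rw [if_pos ⟨rfl, rfl⟩]
      · intro p hp hne
        rw [if_neg]
        rintro ⟨e1, e2⟩
        exact hne (Prod.ext e1.symm e2.symm)
    · rw [if_neg hc]
      refine Finset.sum_eq_zero fun p hp => ?_
      rw [Finset.HasAntidiagonal.mem_antidiagonal] at hp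
      rw [if_neg]
      rintro ⟨e1, e2⟩
      exact hc (by omega)
  set S : Finset (ℤ×ℤ) := (Icc (-B) B ×ˢ Icc (-B) B).filter
      (fun p => p.1^2 + 3*p.2^2 = (t:ℤ)) with hSdef
  have hsum : coeff t (theta 1 1 * phi3) = (S.card : ℤ) := by
    rw [hstep1, ← Finset.sum_product']
    have hflt : ∀ p : ℤ×ℤ, (p.1.natAbs*p.1.natAbs + 3*(p.2.natAbs*p.2.natAbs) = t)
        ↔ (p.1^2 + 3*p.2^2 = (t:ℤ)) := by
      intro p
      have e1 : ((p.1.natAbs*p.1.natAbs : ℕ) : ℤ) = p.1^2 := by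
        push_cast [Int.natAbs_mul_self]
        rw [abs_mul_abs_self, sq]
      have e2 : ((p.2.natAbs*p.2.natAbs : ℕ) : ℤ) = p.2^2 := by
        push_cast [Int.natAbs_mul_self]
        rw [abs_mul_abs_self, sq]
      omega
    have : ∀ p ∈ (Icc (-B) B ×ˢ Icc (-B) B),
        (if p.1.natAbs*p.1.natAbs + 3*(p.2.natAbs*p.2.natAbs) = t
          then ((-1:ℤ)^(p.1.natAbs) * (-1)^(p.2.natAbs)) else 0)
        = (if p.1^2 + 3*p.2^2 = (t:ℤ) then ((-1:ℤ)^(p.1.natAbs) * (-1)^(p.2.natAbs)) else 0) := by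
      intro p _
      exact if_congr (hflt p) rfl rfl
    rw [Finset.sum_congr rfl this, ← Finset.sum_filter, ← hSdef]
    have hone : ∀ p ∈ S, ((-1:ℤ)^(p.1.natAbs) * (-1)^(p.2.natAbs)) = 1 := by
      intro p hp
      rw [hSdef, Finset.mem_filter] at hp
      have hpar := even_add_of_sq p.1 p.2 (t:ℤ) hp.2 (by obtain ⟨u,hu⟩ := hev; exact ⟨(u:ℤ), by push_cast; omega⟩)
      obtain ⟨c, hc⟩ := hpar
      have hE : Even (p.1.natAbs + p.2.natAbs) := ⟨(p.1.natAbs + p.2.natAbs)/2, by omega⟩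
      rw [← pow_add, hE.neg_one_pow]
    rw [Finset.sum_congr rfl hone, Finset.sum_const, nsmul_eq_mul, mul_one]
  rw [hsum]
  have hcard : (3:ℕ) ∣ S.card := by
    by_cases h4 : 4 ∣ t
    · -- bijection to Q and rotation
      obtain ⟨t', ht'⟩ := h4
      have ht'pos : 0 < t' := by omega
      set Q : Finset (ℤ×ℤ) := (Icc (-B) B ×ˢ Icc (-B) B).filter
          (fun p => p.1^2 - p.1*p.2 + p.2^2 = (t':ℤ)) with hQdef
      have hQS : Q.card = S.card := by
        refine Finset.card_bij' (fun q _ => (2*q.1 - q.2, q.2)) (fun p _ => ((p.1+p.2)/2, p.2))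
          ?_ ?_ ?_ ?_
        · intro q hq
          rw [hQdef, Finset.mem_filter, Finset.mem_product, mem_Icc, mem_Icc] at hq
          obtain ⟨⟨hq1, hq2⟩, hq3⟩ := hq
          rw [hSdef, Finset.mem_filter, Finset.mem_product, mem_Icc, mem_Icc]
          have hnorm : (2*q.1 - q.2)^2 + 3*q.2^2 = (t:ℤ) := by
            have : (2*q.1 - q.2)^2 + 3*q.2^2 = 4*(q.1^2 - q.1*q.2 + q.2^2) := by ring
            rw [this, hq3]
            push_cast
            omega
          have hb1 : (2*q.1-q.2)^2 ≤ (t:ℤ) := by nlinarith [sq_nonneg q.2]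
          have hb2 : q.2^2 ≤ (t:ℤ) := by nlinarith [sq_nonneg (2*q.1-q.2)]
          have := abs_le_B (2*q.1-q.2) t hb1
          have := abs_le_B q.2 t hb2
          exact ⟨⟨by omega, by omega⟩, hnorm⟩
        · intro p hp
          rw [hSdef, Finset.mem_filter, Finset.mem_product, mem_Icc, mem_Icc] at hp
          obtain ⟨⟨hp1, hp2⟩, hp3⟩ := hp
          have hpar := even_add_of_sq p.1 p.2 (t:ℤ) hp3 ⟨(t':ℤ)*2, by push_cast; omega⟩
          obtain ⟨c, hc⟩ := hpar
          have hdiv : (p.1 + p.2)/2 = c := by omega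
          rw [hQdef, Finset.mem_filter, Finset.mem_product, mem_Icc, mem_Icc, hdiv]
          have hx : p.1 = 2*c - p.2 := by omega
          have hnorm : c^2 - c*p.2 + p.2^2 = (t':ℤ) := by
            have h4 : (2*c - p.2)^2 + 3*p.2^2 = 4*(c^2 - c*p.2 + p.2^2) := by ring
            rw [hx] at hp3
            have ht4 : (t:ℤ) = 4*(t':ℤ) := by push_cast; omega
            nlinarith [hp3, h4]
          have hb1 : c^2 ≤ (t:ℤ) := by
            have ht4 : (t:ℤ) = 4*(t':ℤ) := by push_cast; omega
            nlinarith [sq_nonneg (c - 2*p.2)]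
          have := abs_le_B c t hb1
          exact ⟨⟨⟨by omega, by omega⟩, hp2⟩, hnorm⟩
        · intro q hq
          dsimp only
          have h5 : (2*q.1 - q.2 + q.2)/2 = q.1 := by omega
          rw [h5]
        · intro p hp
          dsimp only
          rw [hSdef, Finset.mem_filter, Finset.mem_product, mem_Icc, mem_Icc] at hp
          obtain ⟨⟨hp1, hp2⟩, hp3⟩ := hp
          have hpar := even_add_of_sq p.1 p.2 (t:ℤ) hp3 ⟨(t:ℤ)/2, by obtain ⟨u,hu⟩ := hev; push_cast; omega⟩
          obtain ⟨c, hc⟩ := hpar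
          have h5 : 2*((p.1+p.2)/2) - p.2 = p.1 := by omega
          rw [h5]
      rw [← hQS]
      refine three_dvd_card Q.card Q (fun p => (-p.2, p.1 - p.2)) rfl ?_ ?_ ?_
      · intro p hp
        rw [hQdef, Finset.mem_filter, Finset.mem_product, mem_Icc, mem_Icc] at hp
        obtain ⟨⟨hp1, hp2⟩, hp3⟩ := hp
        rw [hQdef, Finset.mem_filter, Finset.mem_product, mem_Icc, mem_Icc]
        have hnorm : (-p.2)^2 - (-p.2)*(p.1-p.2) + (p.1-p.2)^2 = (t':ℤ) := by
          rw [← hp3]; ring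
        have ht4 : (t:ℤ) = 4*(t':ℤ) := by push_cast; omega
        have hb1 : (p.1-p.2)^2 ≤ (t:ℤ) := by nlinarith [sq_nonneg p.1, sq_nonneg p.2, sq_nonneg (p.1+p.2)]
        have hb2 : p.2^2 ≤ (t:ℤ) := by nlinarith [sq_nonneg (2*p.1-p.2)]
        have := abs_le_B (p.1-p.2) t hb1
        have := abs_le_B p.2 t hb2
        exact ⟨⟨⟨by omega, by omega⟩, by omega, by omega⟩, hnorm⟩
      · intro p _
        dsimp only
        rw [Prod.mk.injEq]
        constructor <;> ring
      · intro p hp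
        rw [hQdef, Finset.mem_filter] at hp
        intro hcon
        rw [Prod.mk.injEq] at hcon
        obtain ⟨hc1, hc2⟩ := hcon
        have hz1 : p.1 = 0 := by omega
        have hz2 : p.2 = 0 := by omega
        have := hp.2
        rw [hz1, hz2] at this
        simp at this
        omega
    · -- t ≡ 2 mod 4 : S is empty
      have hempty : S = ∅ := by
        rw [Finset.eq_empty_iff_forall_notMem]
        intro p hp
        rw [hSdef, Finset.mem_filter] at hp
        exact h4 (four_dvd_of_sq p.1 p.2 t hp.2 hev)
      rw [hempty]
      simp
  exact_mod_cast Int.natCast_dvd_natCast.mpr hcard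

end Vanish

section Final
open Finset

lemma phibar_cube :
    (PowerSeries.map (Int.castRingHom (ZMod 3)) (theta 1 1))^3
      = PowerSeries.map (Int.castRingHom (ZMod 3)) phi3 := by
  ext n
  conv_rhs => rw [phi3, PowerSeries.coeff_map, coeff_mk]
  rw [cube_coeff, PowerSeries.coeff_map]
  by_cases h3 : 3 ∣ n
  · rw [if_pos h3, if_pos h3]
  · rw [if_neg h3, if_neg h3, map_zero]

lemma main_eq (d : ℕ → ℤ) (hd : PowerSeries.mk d = f 3 ^ 3 * finv 1 * finv 2) :
    PowerSeries.map (Int.castRingHom (ZMod 3)) (PowerSeries.mk d)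
      = PowerSeries.map (Int.castRingHom (ZMod 3)) (theta 1 1 * phi3)
        * PowerSeries.map (Int.castRingHom (ZMod 3)) (f 6) := by
  set ρ := Int.castRingHom (ZMod 3)
  have h1 : PowerSeries.map ρ (f 1) * PowerSeries.map ρ (finv 1) = 1 := by
    rw [← map_mul, f_mul_finv 1 le_rfl, map_one]
  have h2 : PowerSeries.map ρ (f 2) * PowerSeries.map ρ (finv 2) = 1 := by
    rw [← map_mul, f_mul_finv 2 (by omega), map_one]
  have hg : (PowerSeries.map ρ (f 1))^2 = PowerSeries.map ρ (theta 1 1) * PowerSeries.map ρ (f 2) := by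
    rw [← map_pow, gauss_s5, map_mul]
  have c1 : (PowerSeries.map ρ (f 1))^3 = PowerSeries.map ρ (f 3) := by
    have h := fbar_cube 1 le_rfl
    norm_num at h
    exact h
  have c2 : (PowerSeries.map ρ (f 2))^3 = PowerSeries.map ρ (f 6) := by
    have h := fbar_cube 2 (by omega)
    norm_num at h
    exact h
  have claim : PowerSeries.map ρ (theta 1 1 * phi3) * PowerSeries.map ρ (f 6)
      * (PowerSeries.map ρ (f 1) * PowerSeries.map ρ (f 2)) = (PowerSeries.map ρ (f 3))^3 := by
    rw [map_mul, ← phibar_cube, ← c2, ← c1]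
    calc PowerSeries.map ρ (theta 1 1) * (PowerSeries.map ρ (theta 1 1))^3 * (PowerSeries.map ρ (f 2))^3
          * (PowerSeries.map ρ (f 1) * PowerSeries.map ρ (f 2))
        = (PowerSeries.map ρ (theta 1 1) * PowerSeries.map ρ (f 2))^4 * PowerSeries.map ρ (f 1) := by
          ring
      _ = ((PowerSeries.map ρ (f 1))^2)^4 * PowerSeries.map ρ (f 1) := by rw [hg]
      _ = ((PowerSeries.map ρ (f 1))^3)^3 := by ring
  rw [hd, map_mul, map_mul, map_pow, ← claim]
  calc PowerSeries.map ρ (theta 1 1 * phi3) * PowerSeries.map ρ (f 6)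
        * (PowerSeries.map ρ (f 1) * PowerSeries.map ρ (f 2)) * PowerSeries.map ρ (finv 1)
        * PowerSeries.map ρ (finv 2)
      = (PowerSeries.map ρ (theta 1 1 * phi3) * PowerSeries.map ρ (f 6))
        * ((PowerSeries.map ρ (f 1) * PowerSeries.map ρ (finv 1))
          * (PowerSeries.map ρ (f 2) * PowerSeries.map ρ (finv 2))) := by ring
    _ = _ := by rw [h1, h2]; ring

lemma theta126_support (r : ℕ) (h : PowerSeries.coeff r (theta 12 6) ≠ 0) :
    ∃ w : ℤ, (r : ℤ) = 9*w^2 + 3*w := by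
  rw [theta, coeff_mk] at h
  obtain ⟨w, hw, hne⟩ := Finset.exists_ne_zero_of_sum_ne_zero h
  by_cases hc : 12 * Tn w + 6 * Tn (-w) = r
  · refine ⟨w, ?_⟩
    have c1 := Tn_cast w
    have c2 := Tn_cast (-w)
    have pr1 : w*(w+1) = w*w + w := by ring
    have pr2 : (-w)*((-w)+1) = w*w - w := by ring
    have hcast : ((12 * Tn w + 6 * Tn (-w) : ℕ) : ℤ) = 9*w^2 + 3*w := by
      push_cast
      have hsq : w^2 = w*w := sq w
      rw [hsq]
      linarith
    rw [← hc]
    exact hcast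
  · rw [if_neg hc] at hne
    exact absurd rfl hne

lemma arith_main (p α n j : ℕ) (hp : p.Prime) (hp5 : 5 ≤ p) (hα : 1 ≤ α)
    (hj1 : 1 ≤ j) (hjp : j ≤ p - 1) :
    6 ∣ (6 * p ^ (2*α) * n + ((24*j + p) * p ^ (2*α-1) - 1) / 4) ∧
    ∀ c : ℕ, 4 * (6 * p ^ (2*α) * n + ((24*j + p) * p ^ (2*α-1) - 1) / 4) + 1 ≠ c^2 := by
  set P1 := p ^ (2*α-1) with hP1
  set P2 := p ^ (2*α) with hP2
  have hPP : P2 = P1 * p := by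
    rw [hP1, hP2, ← pow_succ]
    congr 1
    omega
  have hodd : p % 2 = 1 := by
    rcases hp.eq_two_or_odd with h | h
    · omega
    · exact h
  have h3p : p % 3 ≠ 0 := by
    intro h
    have h3 : (3:ℕ) ∣ p := by omega
    have := (Nat.prime_dvd_prime_iff_eq (by norm_num) hp).mp h3
    omega
  have hsq24 : p^2 % 24 = 1 := by
    have hmod : p^2 % 24 = (p%24)^2 % 24 := by rw [Nat.pow_mod]
    have h2 : p % 24 % 2 = 1 := by omega
    have h3 : p % 24 % 3 ≠ 0 := by omega
    have hlt : p % 24 < 24 := by omega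
    rw [hmod]
    interval_cases h : p % 24 <;> simp_all
  have hP2mod : P2 % 24 = 1 := by
    have hpm : p ^ (2*α) = (p^2)^α := by rw [← pow_mul]
    rw [hP2, hpm, Nat.pow_mod, hsq24, one_pow]
    omega
  have hA : (24*j + p) * P1 = 24*(j*P1) + P2 := by rw [hPP]; ring
  have hP1pos : 1 ≤ P1 := Nat.one_le_iff_ne_zero.mpr (pow_ne_zero _ (by omega))
  have hP2pos : 1 ≤ P2 := Nat.one_le_iff_ne_zero.mpr (pow_ne_zero _ (by omega))
  have h6P2n : 6 * P2 * n = 6*(P2*n) := by ring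
  constructor
  · omega
  · intro c hc
    have hB : P1 * (24*j + p + 24*p*n) = 24*(j*P1) + P2 + 24*(P2*n) := by rw [hPP]; ring
    have hmB : 4 * (6*P2*n + ((24*j+p)*P1 - 1)/4) + 1 = P1 * (24*j + p + 24*p*n) := by omega
    have hpB : ¬ p ∣ (24*j + p + 24*p*n) := by
      intro hdvd
      have h1 : p ∣ p*(1 + 24*n) := Dvd.intro _ rfl
      have h2 : 24*j + p + 24*p*n = 24*j + p*(1+24*n) := by ring
      rw [h2] at hdvd
      have h24j : p ∣ 24*j := (Nat.dvd_add_right h1).mp (by rwa [add_comm (24*j)] at hdvd)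
      rcases (Nat.Prime.dvd_mul hp).mp h24j with h24 | hjd
      · have h8 : (24:ℕ) = 8*3 := by norm_num
        rw [h8] at h24
        rcases (Nat.Prime.dvd_mul hp).mp h24 with h8' | h3'
        · have h2' : p ∣ 2 := hp.dvd_of_dvd_pow (show p ∣ 2^3 by norm_num; exact h8')
          have := Nat.le_of_dvd (by norm_num) h2'
          omega
        · have := Nat.le_of_dvd (by norm_num) h3'
          omega
      · have := Nat.le_of_dvd (by omega) hjd
        omega
    rw [hmB] at hc
    have hB0 : (24*j + p + 24*p*n) ≠ 0 := by omega
    have hc0 : c ≠ 0 := by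
      intro h0
      rw [h0] at hc
      have hz : P1 * (24*j + p + 24*p*n) = 0 := by simpa using hc
      exact (Nat.mul_ne_zero (by omega) hB0) hz
    have hfm : (P1 * (24*j + p + 24*p*n)).factorization p = 2*α - 1 := by
      rw [Nat.factorization_mul (by omega) hB0, Finsupp.add_apply,
        Nat.factorization_eq_zero_of_not_dvd hpB, hP1, Nat.Prime.factorization_pow hp,
        Finsupp.single_eq_same]
      omega
    have hfc : (c^2).factorization p = 2 * (c.factorization p) := by
      rw [Nat.factorization_pow]
      simp [mul_comm]
    rw [hc] at hfm
    rw [hfc] at hfm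
    omega

end Final


theorem d_congruence_mod_three (d : ℕ → ℤ)
    (hd : PowerSeries.mk d = f 3 ^ 3 * finv 1 * finv 2)
    (p : ℕ) (hp : p.Prime) (hp5 : 5 ≤ p) (α : ℕ) (hα : 1 ≤ α)
    (n : ℕ) (j : ℕ) (hj1 : 1 ≤ j) (hjp : j ≤ p - 1) :
    (3 : ℤ) ∣ d (6 * p ^ (2 * α) * n + ((24 * j + p) * p ^ (2 * α - 1) - 1) / 4) := by
  obtain ⟨h6, hnsq⟩ := arith_main p α n j hp hp5 hα hj1 hjp
  set N := 6 * p ^ (2 * α) * n + ((24 * j + p) * p ^ (2 * α - 1) - 1) / 4 with hN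
  have hkey : PowerSeries.coeff N
      (PowerSeries.map (Int.castRingHom (ZMod 3)) (PowerSeries.mk d)) = 0 := by
    rw [main_eq d hd, PowerSeries.coeff_mul]
    refine Finset.sum_eq_zero fun q hq => ?_
    rw [Finset.HasAntidiagonal.mem_antidiagonal] at hq
    by_cases hr : PowerSeries.coeff q.2
        (PowerSeries.map (Int.castRingHom (ZMod 3)) (f 6)) = 0
    · rw [hr, mul_zero]
    · have hne : PowerSeries.coeff q.2 (theta 12 6) ≠ 0 := by
        intro h0
        apply hr
        rw [pent6, PowerSeries.coeff_map, h0, map_zero]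
      obtain ⟨w, hw⟩ := theta126_support q.2 hne
      have h6r : (6:ℤ) ∣ (q.2 : ℤ) := by
        rcases Int.even_or_odd w with ⟨c, hcc⟩ | ⟨c, hcc⟩
        · exact ⟨6*c^2+c, by rw [hw, hcc]; ring⟩
        · exact ⟨6*c^2+7*c+2, by rw [hw, hcc]; ring⟩
      have h6rn : 6 ∣ q.2 := by exact_mod_cast h6r
      by_cases hi0 : q.1 = 0
      · exfalso
        have hq2 : q.2 = N := by omega
        apply hnsq (6*w+1).natAbs
        have hcast : ((4*N+1 : ℕ) : ℤ) = (((6*w+1).natAbs^2 : ℕ) : ℤ) := by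
          push_cast [Int.natCast_natAbs]
          rw [sq_abs]
          rw [hq2] at hw
          rw [hw]
          ring
        exact Nat.cast_injective hcast
      · have hev : Even q.1 := ⟨q.1/2, by omega⟩
        have hV := V_int q.1 (by omega) hev
        have hz : PowerSeries.coeff q.1
            (PowerSeries.map (Int.castRingHom (ZMod 3)) (theta 1 1 * phi3)) = 0 := by
          rw [PowerSeries.coeff_map]
          have h := (ZMod.intCast_zmod_eq_zero_iff_dvd
            (PowerSeries.coeff q.1 (theta 1 1 * phi3)) 3).mpr (by exact_mod_cast hV)
          exact_mod_cast h
        rw [hz, zero_mul]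
  have hfin : ((d N : ℤ) : ZMod 3) = 0 := by
    rw [← hkey, PowerSeries.coeff_map, coeff_mk]
    rfl
  have hdvd := (ZMod.intCast_zmod_eq_zero_iff_dvd (d N) 3).mp hfin
  exact_mod_cast hdvd
end
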